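/- arXiv:1803.05396 — 7 statements merged into one kernel-verified Lean document; each statement's English description precedes it below -/
import Mathlib

section
/- Let t ≥ 2 and let G be a finite P_t-free simple graph with maximum degree Δ ≥ 1. Then the pathwidth of G is at most (Δ − 1)(t − 2) + 1. -/
set_option linter.unusedSectionVars false
set_option maxHeartbeats 1000000

namespace PWaux
open SimpleGraph Finset List

variable {V : Type} [Fintype V] [DecidableEq V]

/-- `IndPath G l` : `l` is an induced path in `G` (listed in order, no repeats). -/
inductive IndPath (G : SimpleGraph V) : List V → Prop
  | nil : IndPath G []
  | single (a : V) : IndPath G [a]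
  | cons (a b : V) (rest : List V) (hab : G.Adj a b)
      (hnon : ∀ c ∈ rest, ¬ G.Adj a c) (hmem : a ∉ b :: rest)
      (hp : IndPath G (b :: rest)) : IndPath G (a :: b :: rest)

variable {G : SimpleGraph V}

lemma IndPath.nodup {l : List V} (h : IndPath G l) : l.Nodup := by
  induction h with
  | nil => simp
  | single a => simp
  | cons a b rest hab hnon hmem hp ih => exact List.nodup_cons.2 ⟨hmem, ih⟩

lemma IndPath.chain' {l : List V} (h : IndPath G l) : l.Chain' G.Adj := by
  induction h with
  | nil => exact List.isChain_nil
  | single a => exact List.isChain_singleton a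
  | cons a b rest hab hnon hmem hp ih => exact List.isChain_cons_cons.2 ⟨hab, ih⟩

lemma IndPath.tail {a : V} {l : List V} (h : IndPath G (a :: l)) : IndPath G l := by
  cases h with
  | single a => exact IndPath.nil
  | cons a b rest hab hnon hmem hp => exact hp

lemma IndPath.take {l : List V} (h : IndPath G l) : ∀ m, IndPath G (l.take m) := by
  induction h with
  | nil => intro m; simp; exact IndPath.nil
  | single a =>
    intro m
    match m with
    | 0 => exact IndPath.nil
    | (m+1) => simpa using IndPath.single a
  | cons a b rest hab hnon hmem hp ih =>
    intro m
    match m with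
    | 0 => exact IndPath.nil
    | 1 => simpa using IndPath.single a
    | (m+2) =>
      simp only [List.take_succ_cons]
      refine IndPath.cons a b _ hab (fun c hc => hnon c (List.take_subset _ _ hc)) ?_ ?_
      · intro hc
        apply hmem
        rcases List.mem_cons.1 hc with h' | h'
        · exact List.mem_cons.2 (Or.inl h')
        · exact List.mem_cons.2 (Or.inr (List.take_subset _ _ h'))
      · have := ih (m+1)
        simpa using this

lemma IndPath.not_adj {l : List V} (h : IndPath G l) :
    ∀ (i j : ℕ) (hi : i < l.length) (hj : j < l.length), i + 2 ≤ j →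
      ¬ G.Adj (l[i]'hi) (l[j]'hj) := by
  induction h with
  | nil => intro i j hi; simp at hi
  | single a => intro i j hi hj hij; simp at hi hj; omega
  | cons a b rest hab hnon hmem hp ih =>
    intro i j hi hj hij
    match i, j with
    | 0, (j+2) =>
      simp only [List.getElem_cons_zero, List.getElem_cons_succ]
      exact hnon _ (List.getElem_mem _)
    | (i+1), (j+1) =>
      simp only [List.getElem_cons_succ]
      exact ih i j (by simpa using hi) (by simpa using hj) (by omega)

lemma IndPath.adj_succ {l : List V} (h : IndPath G l) (i : ℕ) (hi : i + 1 < l.length) :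
    G.Adj (l[i]'(by omega)) (l[i+1]'hi) := by
  have := List.isChain_iff_getElem.1 h.chain' i (by omega)
  simpa [List.get_eq_getElem] using this

/-- From an induced path on `n` vertices we get an embedding of the path graph. -/
lemma IndPath.toEmb {l : List V} (h : IndPath G l) {n : ℕ} (hl : l.length = n) :
    Nonempty (pathGraph n ↪g G) := by
  refine ⟨⟨⟨fun i => l[(i : ℕ)]'(by omega), ?_⟩, ?_⟩⟩
  · intro i j hij
    apply Fin.ext
    exact (List.Nodup.getElem_inj_iff h.nodup).1 hij
  · intro i j
    show G.Adj (l[(i : ℕ)]'(by omega)) (l[(j : ℕ)]'(by omega)) ↔ _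
    rw [pathGraph_adj]
    constructor
    · intro hadj
      by_contra hne
      push_neg at hne
      rcases Nat.lt_trichotomy (i : ℕ) (j : ℕ) with hlt | heq | hgt
      · have : (i : ℕ) + 2 ≤ (j : ℕ) := by omega
        exact h.not_adj _ _ _ _ this hadj
      · exact G.ne_of_adj hadj (by congr 1)
      · have : (j : ℕ) + 2 ≤ (i : ℕ) := by omega
        exact h.not_adj _ _ _ _ this hadj.symm
    · intro hij
      rcases hij with h1 | h1
      · have := h.adj_succ (i : ℕ) (by omega)
        convert this using 2
        omega
      · have := h.adj_succ (j : ℕ) (by omega)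
        exact (by convert this.symm using 2; omega)

lemma IndPath.length_lt {t : ℕ} (hfree : IsEmpty (pathGraph t ↪g G))
    {l : List V} (h : IndPath G l) : l.length < t := by
  by_contra hle
  push_neg at hle
  have h2 : (l.take t).length = t := by simp [hle]
  exact hfree.elim' ((h.take t).toEmb h2).some


variable [DecidableRel G.Adj]

/-- closed neighborhood of a list of vertices -/
def NS (G : SimpleGraph V) [DecidableRel G.Adj] (l : List V) : Finset V :=
  l.toFinset ∪ l.toFinset.biUnion (fun x => G.neighborFinset x)

lemma mem_NS_of_mem {l : List V} {a : V} (h : a ∈ l) : a ∈ NS G l :=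
  Finset.mem_union.2 (Or.inl (List.mem_toFinset.2 h))

lemma mem_NS_of_adj {l : List V} {q a : V} (hq : q ∈ l) (h : G.Adj q a) : a ∈ NS G l :=
  Finset.mem_union.2 (Or.inr (Finset.mem_biUnion.2
    ⟨q, List.mem_toFinset.2 hq, (SimpleGraph.mem_neighborFinset _ _ _).2 h⟩))

lemma not_adj_of_not_mem_NS {l : List V} {a c : V} (h : a ∉ NS G l) (hc : c ∈ l) :
    ¬ G.Adj a c := fun hadj => h (mem_NS_of_adj hc hadj.symm)

lemma not_mem_of_not_mem_NS {l : List V} {a : V} (h : a ∉ NS G l) : a ∉ l :=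
  fun hc => h (mem_NS_of_mem hc)

lemma NS_card_le {Δ : ℕ} (hΔ : 1 ≤ Δ) (hd : ∀ v, G.degree v ≤ Δ) {l : List V}
    (h : IndPath G l) (hne : 1 ≤ l.length) : (NS G l).card ≤ l.length * (Δ - 1) + 2 := by
  induction h with
  | nil => simp at hne
  | single a =>
    have : NS G [a] = insert a (G.neighborFinset a) := by
      simp [NS]
    rw [this]
    have h1 := Finset.card_insert_le a (G.neighborFinset a)
    have h2 : (G.neighborFinset a).card ≤ Δ := by
      rw [SimpleGraph.card_neighborFinset_eq_degree]; exact hd a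
    simp only [List.length_singleton, one_mul]
    omega
  | cons a b rest hab hnon hmem hp ih =>
    have hsub : NS G (a :: b :: rest) ⊆ NS G (b :: rest) ∪ ((G.neighborFinset a).erase b) := by
      intro z hz
      rcases Finset.mem_union.1 hz with hz | hz
      · rw [List.toFinset_cons, Finset.mem_insert] at hz
        rcases hz with rfl | hz
        · exact Finset.mem_union.2 (Or.inl (mem_NS_of_adj (List.mem_cons_self) hab.symm))
        · exact Finset.mem_union.2 (Or.inl (Finset.mem_union.2 (Or.inl hz)))
      · rcases Finset.mem_biUnion.1 hz with ⟨q, hq, hzq⟩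
        rw [List.toFinset_cons, Finset.mem_insert] at hq
        rcases hq with hqa | hq
        · -- z ∈ N(a)
          rw [hqa] at hzq
          by_cases hzb : z = b
          · rw [hzb]
            exact Finset.mem_union.2 (Or.inl (mem_NS_of_mem (List.mem_cons_self)))
          · exact Finset.mem_union.2 (Or.inr (Finset.mem_erase.2 ⟨hzb, hzq⟩))
        · exact Finset.mem_union.2 (Or.inl (Finset.mem_union.2 (Or.inr
            (Finset.mem_biUnion.2 ⟨q, List.mem_toFinset.2 (List.mem_dedup.1 (by simpa using List.mem_toFinset.1 hq)), hzq⟩))))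
    have h1 := Finset.card_le_card hsub
    have h2 := Finset.card_union_le (NS G (b :: rest)) ((G.neighborFinset a).erase b)
    have h3 : ((G.neighborFinset a).erase b).card = (G.neighborFinset a).card - 1 :=
      Finset.card_erase_of_mem ((SimpleGraph.mem_neighborFinset _ _ _).2 hab)
    have h4 : (G.neighborFinset a).card ≤ Δ := by
      rw [SimpleGraph.card_neighborFinset_eq_degree]; exact hd a
    have h5 := ih (by simp)
    have hlen : (a :: b :: rest).length = (b :: rest).length + 1 := by simp
    rw [hlen, Nat.add_mul, one_mul]
    omega

/-- main bound: any nonempty induced path has `|N[Q]| ≤ (Δ-1)(t-2)+2`. -/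
lemma NS_card_main {Δ t : ℕ} (hΔ : 1 ≤ Δ) (ht : 3 ≤ t) (hd : ∀ v, G.degree v ≤ Δ)
    (hlen : ∀ l : List V, IndPath G l → l.length < t)
    {l : List V} (h : IndPath G l) (hne : 1 ≤ l.length) :
    (NS G l).card ≤ (Δ - 1) * (t - 2) + 2 := by
  have hlt := hlen l h
  by_cases hc : l.length ≤ t - 2
  · have := NS_card_le hΔ hd h hne
    have h2 : l.length * (Δ - 1) ≤ (t-2) * (Δ-1) := Nat.mul_le_mul_right _ hc
    rw [Nat.mul_comm (Δ-1) (t-2)]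
    omega
  · -- l.length = t - 1
    push_neg at hc
    match l, h with
    | [a], h => simp at hc; omega
    | (a :: b :: rest), h =>
      cases h with
      | cons a b rest hab hnon hmem hp =>
      have hlb : (b :: rest).length = t - 2 := by
        have := hlen _ (IndPath.cons a b rest hab hnon hmem hp)
        simp at this hc ⊢
        omega
      -- absorption: NS (a :: b :: rest) ⊆ NS (b :: rest)
      have habs : NS G (a :: b :: rest) ⊆ NS G (b :: rest) := by
        intro z hz
        rcases Finset.mem_union.1 hz with hz | hz
        · rw [List.toFinset_cons, Finset.mem_insert] at hz
          rcases hz with rfl | hz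
          · exact mem_NS_of_adj (List.mem_cons_self) hab.symm
          · exact Finset.mem_union.2 (Or.inl hz)
        · rcases Finset.mem_biUnion.1 hz with ⟨q, hq, hzq⟩
          rw [List.toFinset_cons, Finset.mem_insert] at hq
          rcases hq with hqa | hq
          · -- z ∈ N(a); if z ∉ NS (b::rest) we get an induced path of length t
            rw [hqa] at hzq
            by_contra hzn
            have hadj : G.Adj z a := ((SimpleGraph.mem_neighborFinset _ _ _).1 hzq).symm
            have hznon : ∀ c ∈ b :: rest, ¬ G.Adj z c := fun c hc' =>
              not_adj_of_not_mem_NS hzn hc'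
            have hzmem : z ∉ a :: b :: rest := by
              intro hzz
              rcases List.mem_cons.1 hzz with rfl | hzz
              · exact G.irrefl hadj
              · exact not_mem_of_not_mem_NS hzn hzz
            have hpath := IndPath.cons z a (b :: rest) hadj
              (fun c hc' => hznon c hc') hzmem (IndPath.cons a b rest hab hnon hmem hp)
            have := hlen _ hpath
            simp at this hlb
            omega
          · exact Finset.mem_union.2 (Or.inr (Finset.mem_biUnion.2 ⟨q, hq, hzq⟩))
      have h1 := Finset.card_le_card habs
      have h2 := NS_card_le hΔ hd hp (by simp)
      rw [hlb] at h2
      have h3 : (t-2) * (Δ-1) = (Δ-1) * (t-2) := Nat.mul_comm _ _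
      omega



/-- visited vertices that still have an unvisited neighbor -/
def dirty (G : SimpleGraph V) [DecidableRel G.Adj] (D : Finset V) : Finset V :=
  D.filter (fun x => ∃ y, y ∉ D ∧ G.Adj x y)

/-- termination measure -/
def msr (G : SimpleGraph V) [DecidableRel G.Adj] (D : Finset V) (Q : List V) : ℕ :=
  (Fintype.card V - D.card) * (Fintype.card V + 1)^2
    + ((dirty G D).filter (fun x => x ∉ Q)).card * (Fintype.card V + 1) + Q.length

lemma msr_visit (D : Finset V) (Q Q' : List V) (w : V) (hw : w ∉ D) (hnd : Q'.Nodup) :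
    msr G (insert w D) Q' < msr G D Q := by
  set N := Fintype.card V with hN
  have hD1 : (insert w D).card = D.card + 1 := Finset.card_insert_of_notMem hw
  have hD2 : (insert w D).card ≤ N := Finset.card_le_univ _
  have hlen : Q'.length ≤ N := by
    rw [← List.toFinset_card_of_nodup hnd]; exact Finset.card_le_univ _
  have hdir : ((dirty G (insert w D)).filter (fun x => x ∉ Q')).card ≤ N :=
    Finset.card_le_univ _
  have ha : N - (insert w D).card + 1 = N - D.card := by omega
  unfold msr
  rw [← hN]
  set a := N - (insert w D).card with haa
  calc a * (N+1)^2 + ((dirty G (insert w D)).filter (fun x => x ∉ Q')).card * (N + 1) + Q'.length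
      ≤ a * (N+1)^2 + N * (N+1) + N := by
        have := Nat.mul_le_mul_right (N+1) hdir
        omega
    _ < (a + 1) * (N+1)^2 := by nlinarith
    _ = (N - D.card) * (N+1)^2 := by rw [ha]
    _ ≤ (N - D.card) * (N+1)^2 + ((dirty G D).filter (fun x => x ∉ Q)).card * (N + 1) + Q.length := by omega

lemma msr_wait (D : Finset V) (Q : List V) (x : V) (hx : x ∈ dirty G D) (hxQ : x ∉ Q) :
    msr G D (x :: Q) < msr G D Q := by
  set N := Fintype.card V with hN
  have hfil : (dirty G D).filter (fun z => z ∉ x :: Q)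
      = ((dirty G D).filter (fun z => z ∉ Q)).erase x := by
    ext z
    simp only [Finset.mem_filter, Finset.mem_erase, List.mem_cons]
    constructor
    · rintro ⟨hz, hz2⟩
      push_neg at hz2
      exact ⟨hz2.1, hz, hz2.2⟩
    · rintro ⟨hzx, hz, hz2⟩
      refine ⟨hz, ?_⟩
      push_neg
      exact ⟨hzx, hz2⟩
  have hxf : x ∈ (dirty G D).filter (fun z => z ∉ Q) := Finset.mem_filter.2 ⟨hx, hxQ⟩
  have hcpos : 1 ≤ ((dirty G D).filter (fun z => z ∉ Q)).card := Finset.card_pos.2 ⟨x, hxf⟩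
  have hcard : ((dirty G D).filter (fun z => z ∉ x :: Q)).card
      = ((dirty G D).filter (fun z => z ∉ Q)).card - 1 := by
    rw [hfil]; exact Finset.card_erase_of_mem hxf
  unfold msr
  rw [← hN, hcard]
  set c := ((dirty G D).filter (fun z => z ∉ Q)).card with hc
  have h1 : c * (N+1) = (c - 1) * (N+1) + (N+1) := by
    have : c - 1 + 1 = c := by omega
    calc c * (N+1) = (c - 1 + 1) * (N+1) := by rw [this]
      _ = (c-1) * (N+1) + (N+1) := by ring
  have hlen : (x :: Q).length = Q.length + 1 := by simp
  rw [hlen, h1]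
  have hNpos : 1 ≤ N := Fintype.card_pos (α := V) (h := ⟨x⟩)
  omega

lemma msr_pop (D : Finset V) (q : V) (rest : List V) (hq : q ∉ dirty G D) :
    msr G D rest < msr G D (q :: rest) := by
  have hfil : (dirty G D).filter (fun z => z ∉ rest)
      = (dirty G D).filter (fun z => z ∉ q :: rest) := by
    ext z
    simp only [Finset.mem_filter, List.mem_cons]
    constructor
    · rintro ⟨hz, hz2⟩
      refine ⟨hz, ?_⟩
      push_neg
      exact ⟨fun hzq => hq (hzq ▸ hz), hz2⟩
    · rintro ⟨hz, hz2⟩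
      push_neg at hz2
      exact ⟨hz, hz2.2⟩
  unfold msr
  rw [hfil]
  simp only [List.length_cons]
  omega

/-- packaging a visit step -/
lemma pack {Δ t : ℕ} (D : Finset V) (w : V) (L' : List V) (hw : w ∉ D) (hnd : L'.Nodup)
    (hmem : ∀ v, v ∈ L' ↔ v ∉ insert w D)
    (hbags : ∀ (A : List V) (v : V) (B : List V), L' = A ++ v :: B →
      (((insert w D) ∪ A.toFinset).filter (fun x => ∃ y ∈ v :: B, G.Adj x y)).card ≤ (Δ-1)*(t-2)+1)
    (hhead : (D.filter (fun x => ∃ y ∈ w :: L', G.Adj x y)).card ≤ (Δ-1)*(t-2)+1) :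
    ∃ L : List V, L.Nodup ∧ (∀ v, v ∈ L ↔ v ∉ D) ∧
      (∀ (A : List V) (v : V) (B : List V), L = A ++ v :: B →
        ((D ∪ A.toFinset).filter (fun x => ∃ y ∈ v :: B, G.Adj x y)).card ≤ (Δ-1)*(t-2)+1) := by
  refine ⟨w :: L', ?_, ?_, ?_⟩
  · exact List.nodup_cons.2 ⟨fun hwL => ((hmem w).1 hwL) (Finset.mem_insert_self _ _), hnd⟩
  · intro v
    by_cases hvw : v = w
    · subst hvw
      simp [hw]
    · rw [List.mem_cons]
      have := hmem v
      simp only [Finset.mem_insert] at this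
      constructor
      · rintro (rfl | hvL)
        · exact absurd rfl hvw
        · intro hvD; exact (this.1 hvL) (Or.inr hvD)
      · intro hvD
        exact Or.inr (this.2 (by push_neg; exact ⟨hvw, hvD⟩))
  · intro A v B hsplit
    match A, hsplit with
    | [], hsplit =>
      have hv : v = w := by
        have := congrArg (fun l : List V => l.head?) hsplit
        simpa using this.symm
      have hB : B = L' := by
        have := congrArg (fun l : List V => l.tail) hsplit
        simpa using this.symm
      subst hv; subst hB
      simpa using hhead
    | (a :: A'), hsplit =>
      have haw : a = w := by
        have := congrArg (fun l : List V => l.head?) hsplit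
        simpa using this.symm
      have hL' : L' = A' ++ v :: B := by simpa using congrArg (fun l => l.tail) hsplit
      subst haw
      have hset : D ∪ (a :: A').toFinset = (insert a D) ∪ A'.toFinset := by
        rw [List.toFinset_cons, Finset.union_insert, Finset.insert_union]
      rw [hset]
      exact hbags A' v B hL'

lemma core {Δ t : ℕ} (hΔ : 1 ≤ Δ) (ht : 3 ≤ t) (hd : ∀ v, G.degree v ≤ Δ)
    (hlen : ∀ l : List V, IndPath G l → l.length < t) :
    ∀ (n : ℕ) (D : Finset V) (Q : List V), msr G D Q < n → IndPath G Q →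
      (∀ q ∈ Q, q ∈ D) →
      (∀ x ∈ D, x ∉ Q → (∃ y, y ∉ D ∧ G.Adj x y) → ∃ q ∈ Q, G.Adj x q) →
      ∃ L : List V, L.Nodup ∧ (∀ v, v ∈ L ↔ v ∉ D) ∧
        (∀ (A : List V) (v : V) (B : List V), L = A ++ v :: B →
          ((D ∪ A.toFinset).filter (fun x => ∃ y ∈ v :: B, G.Adj x y)).card ≤ (Δ-1)*(t-2)+1) := by
  intro n
  induction n with
  | zero => intro D Q hm; exact absurd hm (Nat.not_lt_zero _)
  | succ n ih =>
    intro D Q hm hip hQD hcov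
    cases Q with
    | nil =>
      by_cases hall : ∃ v, v ∉ D
      · obtain ⟨v, hv⟩ := hall
        have hmsr : msr G (insert v D) [v] < msr G D [] :=
          msr_visit D [] [v] v hv (by simp)
        have hcov' : ∀ x ∈ insert v D, x ∉ [v] → (∃ y, y ∉ insert v D ∧ G.Adj x y) →
            ∃ q ∈ [v], G.Adj x q := by
          intro x hx hxQ ⟨y, hy, hadj⟩
          have hxv : x ≠ v := by simpa using hxQ
          have hxD : x ∈ D := by
            rcases Finset.mem_insert.1 hx with h' | h'
            · exact absurd h' hxv
            · exact h'
          have hyD : y ∉ D := fun h' => hy (Finset.mem_insert_of_mem h')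
          rcases hcov x hxD List.not_mem_nil ⟨y, hyD, hadj⟩ with ⟨q, hq, -⟩
          exact absurd hq List.not_mem_nil
        obtain ⟨L', hnd', hmem', hbags'⟩ := ih (insert v D) [v] (by omega)
          (IndPath.single v) (by simp) hcov'
        refine pack D v L' hv hnd' hmem' hbags' ?_
        have : D.filter (fun x => ∃ y ∈ v :: L', G.Adj x y) = ∅ := by
          rw [Finset.filter_eq_empty_iff]
          rintro x hx ⟨y, hyL, hadj⟩
          have hyD : y ∉ D := by
            rcases List.mem_cons.1 hyL with rfl | hyL'
            · exact hv
            · exact fun h' => ((hmem' y).1 hyL') (Finset.mem_insert_of_mem h')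
          rcases hcov x hx List.not_mem_nil ⟨y, hyD, hadj⟩ with ⟨q, hq, -⟩
          exact absurd hq List.not_mem_nil
        rw [this]
        simp
      · push_neg at hall
        refine ⟨[], List.nodup_nil, fun v => by simp [hall v], ?_⟩
        intro A v B hsplit
        exfalso
        cases A <;> simp at hsplit
    | cons q rest =>
      by_cases h1 : ∃ w, w ∉ D ∧ G.Adj q w
      · obtain ⟨w, hwD, hqw⟩ := h1
        have hwNS : w ∈ NS G (q :: rest) := mem_NS_of_adj (List.mem_cons_self) hqw
        have hNSb : (NS G (q :: rest)).card ≤ (Δ-1)*(t-2)+2 :=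
          NS_card_main hΔ ht hd hlen hip (by simp)
        have hhead : ∀ L' : List V, (∀ v, v ∈ L' ↔ v ∉ insert w D) →
            (D.filter (fun x => ∃ y ∈ w :: L', G.Adj x y)).card ≤ (Δ-1)*(t-2)+1 := by
          intro L' hmem'
          have hsub : D.filter (fun x => ∃ y ∈ w :: L', G.Adj x y)
              ⊆ (NS G (q :: rest)).erase w := by
            intro x hx
            rw [Finset.mem_filter] at hx
            obtain ⟨hxD, y, hyL, hadj⟩ := hx
            have hyD : y ∉ D := by
              rcases List.mem_cons.1 hyL with rfl | hyL'
              · exact hwD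
              · exact fun h' => ((hmem' y).1 hyL') (Finset.mem_insert_of_mem h')
            refine Finset.mem_erase.2 ⟨fun hxw => hwD (hxw ▸ hxD), ?_⟩
            by_cases hxQ : x ∈ q :: rest
            · exact mem_NS_of_mem hxQ
            · rcases hcov x hxD hxQ ⟨y, hyD, hadj⟩ with ⟨q', hq', hadj'⟩
              exact mem_NS_of_adj hq' hadj'.symm
          have h2 := Finset.card_le_card hsub
          have h3 : ((NS G (q :: rest)).erase w).card = (NS G (q :: rest)).card - 1 :=
            Finset.card_erase_of_mem hwNS
          omega
        by_cases hpend : ∀ c ∈ rest, ¬ G.Adj w c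
        · -- push
          have hip' : IndPath G (w :: q :: rest) :=
            IndPath.cons w q rest hqw.symm hpend (fun hmem'' => hwD (hQD w hmem'')) hip
          have hmsr : msr G (insert w D) (w :: q :: rest) < msr G D (q :: rest) :=
            msr_visit D (q :: rest) (w :: q :: rest) w hwD hip'.nodup
          have hQD' : ∀ q' ∈ w :: q :: rest, q' ∈ insert w D := by
            intro q' hq'
            rcases List.mem_cons.1 hq' with rfl | hq'
            · exact Finset.mem_insert_self _ _
            · exact Finset.mem_insert_of_mem (hQD q' hq')
          have hcov' : ∀ x ∈ insert w D, x ∉ w :: q :: rest →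
              (∃ y, y ∉ insert w D ∧ G.Adj x y) → ∃ q' ∈ w :: q :: rest, G.Adj x q' := by
            intro x hx hxQ ⟨y, hy, hadj⟩
            have hxw : x ≠ w := fun h => hxQ (h ▸ List.mem_cons_self)
            have hxD : x ∈ D := by
              rcases Finset.mem_insert.1 hx with h' | h'
              · exact absurd h' hxw
              · exact h'
            have hxQ2 : x ∉ q :: rest := fun h => hxQ (List.mem_cons_of_mem _ h)
            have hyD : y ∉ D := fun h' => hy (Finset.mem_insert_of_mem h')
            rcases hcov x hxD hxQ2 ⟨y, hyD, hadj⟩ with ⟨q', hq', hadj'⟩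
            exact ⟨q', List.mem_cons_of_mem _ hq', hadj'⟩
          obtain ⟨L', hnd', hmem', hbags'⟩ := ih (insert w D) (w :: q :: rest) (by omega)
            hip' hQD' hcov'
          exact pack D w L' hwD hnd' hmem' hbags' (hhead L' hmem')
        · -- pendant
          push_neg at hpend
          obtain ⟨c, hc, hwc⟩ := hpend
          have hmsr : msr G (insert w D) (q :: rest) < msr G D (q :: rest) :=
            msr_visit D (q :: rest) (q :: rest) w hwD hip.nodup
          have hQD' : ∀ q' ∈ q :: rest, q' ∈ insert w D := fun q' hq' =>
            Finset.mem_insert_of_mem (hQD q' hq')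
          have hcov' : ∀ x ∈ insert w D, x ∉ q :: rest →
              (∃ y, y ∉ insert w D ∧ G.Adj x y) → ∃ q' ∈ q :: rest, G.Adj x q' := by
            intro x hx hxQ ⟨y, hy, hadj⟩
            by_cases hxw : x = w
            · exact ⟨c, List.mem_cons_of_mem _ hc, hxw ▸ hwc⟩
            · have hxD : x ∈ D := by
                rcases Finset.mem_insert.1 hx with h' | h'
                · exact absurd h' hxw
                · exact h'
              have hyD : y ∉ D := fun h' => hy (Finset.mem_insert_of_mem h')
              exact hcov x hxD hxQ ⟨y, hyD, hadj⟩
          obtain ⟨L', hnd', hmem', hbags'⟩ := ih (insert w D) (q :: rest) (by omega)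
            hip hQD' hcov'
          exact pack D w L' hwD hnd' hmem' hbags' (hhead L' hmem')
      · by_cases h2 : ∃ x, x ∈ D ∧ x ∉ q :: rest ∧ (∃ y, y ∉ D ∧ G.Adj x y) ∧ G.Adj x q
            ∧ ∀ c ∈ rest, ¬ G.Adj x c
        · -- reroute: push a waiting dirty vertex onto the path
          obtain ⟨x, hxD, hxQ, hxdirty, hxq, hxnon⟩ := h2
          have hip' : IndPath G (x :: q :: rest) := IndPath.cons x q rest hxq hxnon hxQ hip
          have hmsr : msr G D (x :: q :: rest) < msr G D (q :: rest) :=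
            msr_wait D (q :: rest) x (Finset.mem_filter.2 ⟨hxD, hxdirty⟩) hxQ
          have hQD' : ∀ q' ∈ x :: q :: rest, q' ∈ D := by
            intro q' hq'
            rcases List.mem_cons.1 hq' with rfl | hq'
            · exact hxD
            · exact hQD q' hq'
          have hcov' : ∀ z ∈ D, z ∉ x :: q :: rest → (∃ y, y ∉ D ∧ G.Adj z y) →
              ∃ q' ∈ x :: q :: rest, G.Adj z q' := by
            intro z hz hzQ hdz
            have hzQ2 : z ∉ q :: rest := fun h => hzQ (List.mem_cons_of_mem _ h)
            rcases hcov z hz hzQ2 hdz with ⟨q', hq', ha⟩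
            exact ⟨q', List.mem_cons_of_mem _ hq', ha⟩
          exact ih D (x :: q :: rest) (by omega) hip' hQD' hcov'
        · -- pop
          have hqdirty : q ∉ dirty G D := by
            intro hq
            rw [dirty, Finset.mem_filter] at hq
            exact h1 hq.2
          have hmsr : msr G D rest < msr G D (q :: rest) := msr_pop D q rest hqdirty
          have hcov' : ∀ z ∈ D, z ∉ rest → (∃ y, y ∉ D ∧ G.Adj z y) →
              ∃ q' ∈ rest, G.Adj z q' := by
            intro z hzD hzrest hdz
            by_cases hzq : z = q
            · exact absurd (hzq ▸ hdz) h1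
            · have hzQ : z ∉ q :: rest := by
                intro h
                rcases List.mem_cons.1 h with h' | h'
                · exact hzq h'
                · exact hzrest h'
              rcases hcov z hzD hzQ hdz with ⟨q', hq', ha⟩
              rcases List.mem_cons.1 hq' with rfl | hq''
              · by_cases hcr : ∃ c ∈ rest, G.Adj z c
                · exact hcr
                · push_neg at hcr
                  exact absurd ⟨z, hzD, hzQ, hdz, ha, hcr⟩ h2
              · exact ⟨q', hq'', ha⟩
          exact ih D rest (by omega) hip.tail (fun q' hq' => hQD q' (List.mem_cons_of_mem _ hq'))
            hcov'

end PWaux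


/-- Let `t ≥ 2` and let `G` be a finite `P_t`-free simple graph with
maximum degree `Δ ≥ 1`. Then the pathwidth of `G` is at most `(Δ − 1)(t − 2) + 1`,
i.e. there is a path-decomposition `(X 1, …, X k)` of `G` all of whose bags have
size at most `(Δ − 1)(t − 2) + 1 + 1`. -/
theorem pathwidth_of_pathFree {V : Type} [Fintype V] [DecidableEq V]
    (G : SimpleGraph V) [DecidableRel G.Adj] (t Δ : ℕ)
    (ht : 2 ≤ t) (hΔ : 1 ≤ Δ) (hdeg : G.maxDegree = Δ)
    (hfree : IsEmpty (SimpleGraph.pathGraph t ↪g G)) :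
    ∃ (k : ℕ) (X : Fin k → Finset V),
      (∀ v : V, ∃ i, v ∈ X i) ∧
      (∀ u v : V, G.Adj u v → ∃ i, u ∈ X i ∧ v ∈ X i) ∧
      (∀ l i j : Fin k, l ≤ i → i ≤ j → X l ∩ X j ⊆ X i) ∧
      (∀ i, (X i).card - 1 ≤ (Δ - 1) * (t - 2) + 1) := by
  classical
  have hd : ∀ v, G.degree v ≤ Δ := fun v => hdeg ▸ G.degree_le_maxDegree v
  have hlen : ∀ l : List V, PWaux.IndPath G l → l.length < t :=
    fun l h => h.length_lt hfree
  have ht3 : 3 ≤ t := by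
    by_contra hlt
    push_neg at hlt
    have hne : Nonempty V := by
      by_contra h
      have hie : IsEmpty V := not_nonempty_iff.1 h
      have h0 : G.maxDegree = 0 := by
        simp [SimpleGraph.maxDegree, Finset.univ_eq_empty]
      omega
    obtain ⟨v, hv⟩ := G.exists_maximal_degree_vertex
    have hpos : 0 < G.degree v := by omega
    obtain ⟨w, hw⟩ := (G.degree_pos_iff_exists_adj v).1 hpos
    have hip : PWaux.IndPath G [v, w] :=
      PWaux.IndPath.cons v w [] hw (by simp) (by simpa using hw.ne) (PWaux.IndPath.single w)
    have := hlen _ hip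
    simp at this
    omega
  obtain ⟨L, hnd, hmem, hbags⟩ := PWaux.core hΔ ht3 hd hlen (PWaux.msr G ∅ [] + 1) ∅ []
    (Nat.lt_succ_self _) PWaux.IndPath.nil (by simp) (by intro x hx; simp at hx)
  have hmemL : ∀ v : V, v ∈ L := fun v => (hmem v).2 (Finset.notMem_empty v)
  set X : Fin L.length → Finset V := fun i =>
    insert (L[(i : ℕ)]'i.isLt)
      ((L.take (i : ℕ)).toFinset.filter (fun x => ∃ y ∈ L.drop (i : ℕ), G.Adj x y)) with hX
  have hmemX : ∀ (m i : ℕ) (hm : m < L.length) (hi : i < L.length), m ≤ i →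
      (m = i ∨ ∃ y ∈ L.drop i, G.Adj (L[m]'hm) y) → (L[m]'hm) ∈ X ⟨i, hi⟩ := by
    intro m i hm hi hmi hcase
    rcases hcase with rfl | ⟨y, hy, hadj⟩
    · exact Finset.mem_insert_self _ _
    · rcases Nat.lt_or_ge m i with hlt | hge
      · refine Finset.mem_insert_of_mem (Finset.mem_filter.2 ⟨?_, ⟨y, hy, hadj⟩⟩)
        rw [List.mem_toFinset]
        have h1 : m < (L.take i).length := by simp; omega
        have h2 : (L.take i)[m]'h1 = L[m]'hm := List.getElem_take (h := h1)
        exact h2 ▸ List.getElem_mem h1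
      · have : m = i := by omega
        subst this
        exact Finset.mem_insert_self _ _
  refine ⟨L.length, X, ?_, ?_, ?_, ?_⟩
  · intro v
    obtain ⟨m, hm, hv⟩ := List.mem_iff_getElem.1 (hmemL v)
    exact ⟨⟨m, hm⟩, hv ▸ hmemX m m hm hm le_rfl (Or.inl rfl)⟩
  · intro u v huv
    obtain ⟨mu, hmu, hu⟩ := List.mem_iff_getElem.1 (hmemL u)
    obtain ⟨mv, hmv, hv⟩ := List.mem_iff_getElem.1 (hmemL v)
    have hdropm : ∀ (j : ℕ) (hj : j < L.length), (L[j]'hj) ∈ L.drop j := by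
      intro j hj
      rw [List.drop_eq_getElem_cons hj]
      exact List.mem_cons_self
    rcases lt_trichotomy mu mv with h | h | h
    · refine ⟨⟨mv, hmv⟩, ?_, ?_⟩
      · exact hu ▸ hmemX mu mv hmu hmv (le_of_lt h)
          (Or.inr ⟨v, hv ▸ hdropm mv hmv, hu ▸ huv⟩)
      · exact hv ▸ hmemX mv mv hmv hmv le_rfl (Or.inl rfl)
    · exfalso
      apply G.ne_of_adj huv
      rw [← hu, ← hv]
      congr 1
    · refine ⟨⟨mu, hmu⟩, ?_, ?_⟩
      · exact hu ▸ hmemX mu mu hmu hmu le_rfl (Or.inl rfl)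
      · exact hv ▸ hmemX mv mu hmv hmu (le_of_lt h)
          (Or.inr ⟨u, hu ▸ hdropm mu hmu, hv ▸ huv.symm⟩)
  · intro l i j hli hij z hz
    rw [Finset.mem_inter] at hz
    obtain ⟨hzl, hzj⟩ := hz
    have hidx : ∃ m, ∃ hm : m < L.length, m ≤ (l : ℕ) ∧ L[m]'hm = z := by
      rcases Finset.mem_insert.1 hzl with h | h
      · exact ⟨l, l.isLt, le_rfl, h.symm⟩
      · rw [Finset.mem_filter] at h
        have hzt : z ∈ L.take (l : ℕ) := List.mem_toFinset.1 h.1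
        obtain ⟨m, hm2, hzz⟩ := List.mem_iff_getElem.1 hzt
        have hmlt : m < (l : ℕ) ∧ m < L.length := by
          have := hm2; simp at this; omega
        refine ⟨m, hmlt.2, le_of_lt hmlt.1, ?_⟩
        rw [← hzz]
        exact (List.getElem_take (h := hm2)).symm
    obtain ⟨m, hm, hml, hzz⟩ := hidx
    rcases Finset.mem_insert.1 hzj with h | h
    · -- z = L[j]
      have hmj : m = (j : ℕ) := by
        have : L[m]'hm = L[(j : ℕ)]'j.isLt := by rw [hzz, h]
        exact (List.Nodup.getElem_inj_iff hnd).1 this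
      have hij2 : (i : ℕ) = (j : ℕ) := by
        have h1 : (l : ℕ) ≤ (i : ℕ) := hli
        have h2 : (i : ℕ) ≤ (j : ℕ) := hij
        omega
      have : i = j := Fin.ext hij2
      rw [this]
      exact hzj
    · rw [Finset.mem_filter] at h
      obtain ⟨-, y, hy, hadj⟩ := h
      have hysub : y ∈ L.drop (i : ℕ) := by
        have hdd : L.drop ((j : ℕ) - (i : ℕ) + (i : ℕ)) = L.drop (j : ℕ) := by
          congr 1
          have : (i : ℕ) ≤ (j : ℕ) := hij
          omega
        have : L.drop (j : ℕ) = List.drop ((j : ℕ) - (i : ℕ)) (L.drop (i : ℕ)) := by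
          rw [List.drop_drop, Nat.add_comm, hdd]
        rw [this] at hy
        exact List.drop_subset _ _ hy
      have hgoal := hmemX m (i : ℕ) hm i.isLt (by
          have : (l : ℕ) ≤ (i : ℕ) := hli
          omega)
        (Or.inr ⟨y, hysub, hzz ▸ hadj⟩)
      rw [hzz] at hgoal
      simpa using hgoal
  · intro i
    have hsplit : L = L.take (i : ℕ) ++ (L[(i : ℕ)]'i.isLt) :: L.drop ((i : ℕ) + 1) := by
      conv_lhs => rw [← List.take_append_drop (i : ℕ) L]
      rw [List.drop_eq_getElem_cons i.isLt]
    have hb := hbags (L.take (i : ℕ)) (L[(i : ℕ)]'i.isLt) (L.drop ((i : ℕ) + 1)) hsplit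
    rw [Finset.empty_union] at hb
    have hfeq : (L.take (i : ℕ)).toFinset.filter (fun x => ∃ y ∈ L.drop (i : ℕ), G.Adj x y)
        = (L.take (i : ℕ)).toFinset.filter
            (fun x => ∃ y ∈ (L[(i : ℕ)]'i.isLt) :: L.drop ((i : ℕ) + 1), G.Adj x y) := by
      ext x
      simp only [Finset.mem_filter]
      rw [List.drop_eq_getElem_cons i.isLt]
    have hcard : (X i).card ≤ (Δ - 1) * (t - 2) + 1 + 1 := by
      have h1 := Finset.card_insert_le (L[(i : ℕ)]'i.isLt)
        ((L.take (i : ℕ)).toFinset.filter (fun x => ∃ y ∈ L.drop (i : ℕ), G.Adj x y))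
      have h2 : ((L.take (i : ℕ)).toFinset.filter
          (fun x => ∃ y ∈ L.drop (i : ℕ), G.Adj x y)).card ≤ (Δ - 1) * (t - 2) + 1 := by
        rw [hfeq]
        convert hb using 3
      calc (X i).card ≤ _ + 1 := h1
        _ ≤ (Δ - 1) * (t - 2) + 1 + 1 := by omega
    omega
end

section
/- For every finite connected simple graph G and every vertex r of G, there exists a spanning tree T of G rooted at r, together with a linear order on the children of each vertex, such that T is an uncle tree of G. -/
/-!
Number the vertices by a greedy search from `r`: the next vertex is an unvisited neighbour of the
visited set whose earliest visited neighbour comes as late as possible, and that earliest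
neighbour becomes its parent. The greedy rule makes the intervals `[pos (parent v), pos v]`
pairwise non-crossing. If `uv` is a non-tree edge with `u` before `v`, then
`pos (parent v) < pos u < pos v`; walking up from `u`, non-crossing keeps every ancestor after
`parent v` until a child of `parent v` is reached, and that child is an elder sibling of `v`
(children are ordered by position) and an ancestor of `u`.
-/

variable {V : Type}

/-- `u` is an ancestor of `v` (possibly `u = v`) in the rooted tree given by
the parent function `parent`. -/
def Anc (parent : V → V) (u v : V) : Prop := ∃ k : ℕ, parent^[k] v = u

/-- `u` is an elder sibling of `v`: both are non-root vertices with the same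
parent, and `u` precedes `v` in the linear order (given by `rank`) on the
children of their common parent. -/
def Elder (parent : V → V) (rank : V → ℕ) (r u v : V) : Prop :=
  u ≠ r ∧ v ≠ r ∧ u ≠ v ∧ parent u = parent v ∧ rank u < rank v

/-- An uncle tree of `G` rooted at `r`: a spanning tree of `G` (encoded by a
parent function `parent` fixing the root `r`, with each tree edge `{v, parent v}`
an edge of `G`, and a `depth` function witnessing well-foundedness), together
with a linear order on the children of each vertex (encoded by `rank`, which is
injective on each set of siblings), such that for every edge `uv` of `G` that is
not an edge of the tree, one of `u, v` has an elder sibling that is an ancestor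
of the other. -/
structure UncleTree (G : SimpleGraph V) (r : V) where
  parent : V → V
  rank : V → ℕ
  depth : V → ℕ
  parent_root : parent r = r
  adj_parent : ∀ v, v ≠ r → G.Adj v (parent v)
  depth_root : depth r = 0
  depth_parent : ∀ v, v ≠ r → depth v = depth (parent v) + 1
  rank_injOn : ∀ u v, u ≠ r → v ≠ r → parent u = parent v → rank u = rank v → u = v
  uncle : ∀ u v, G.Adj u v → parent u = v ∨ parent v = u ∨
      (∃ w, Elder parent rank r w u ∧ Anc parent w v) ∨
      (∃ w, Elder parent rank r w v ∧ Anc parent w u)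

open Function Set

lemma exists_depth_of_measure_lt (parent : V → V) (r : V) (h : V → ℕ)
    (hlt : ∀ v, v ≠ r → h (parent v) < h v) :
    ∃ depth : V → ℕ, depth r = 0 ∧ ∀ v, v ≠ r → depth v = depth (parent v) + 1 := by
  have reach (v : V) : ∃ k, parent^[k] v = r := by
    induction v using (measure h).wf.induction with
    | _ v ih =>
      by_cases hv : v = r
      · exact ⟨0, hv⟩
      · obtain ⟨k, hk⟩ := ih (parent v) (hlt v hv)
        exact ⟨k + 1, hk⟩
  classical
  exact ⟨fun v => Nat.find (reach v), by simp, fun v hv => Nat.find_comp_succ _ _ hv⟩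

/-- `noncrossing` says that no two intervals `[pos (parent v), pos v]` cross. -/
structure NoncrossingOrder (G : SimpleGraph V) (r : V) where
  pos : V → ℕ
  parent : V → V
  pos_injective : Injective pos
  pos_root_le : ∀ v, pos r ≤ pos v
  parent_root : parent r = r
  adj_parent : ∀ v, v ≠ r → G.Adj v (parent v)
  pos_parent_lt : ∀ v, v ≠ r → pos (parent v) < pos v
  pos_parent_le : ∀ v w, G.Adj v w → pos w < pos v → pos (parent v) ≤ pos w
  noncrossing : ∀ u v, v ≠ r → pos (parent v) < pos u → pos u < pos v →
    pos (parent v) ≤ pos (parent u)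

namespace NoncrossingOrder

variable {G : SimpleGraph V} {r : V}

lemma ne_root_of_pos_lt (o : NoncrossingOrder G r) {u v : V} (h : o.pos v < o.pos u) :
    u ≠ r := by
  rintro rfl
  exact (o.pos_root_le v).not_gt h

lemma exists_sibling_anc (o : NoncrossingOrder G r) {u v : V} (hv : v ≠ r)
    (hvu : o.pos (o.parent v) < o.pos u) (huv : o.pos u < o.pos v) :
    ∃ w, o.parent w = o.parent v ∧ o.pos (o.parent v) < o.pos w ∧ o.pos w < o.pos v ∧
      Anc o.parent w u := by
  induction u using (measure o.pos).wf.induction with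
  | _ u ih =>
    have hu : u ≠ r := o.ne_root_of_pos_lt hvu
    rcases (o.noncrossing u v hv hvu huv).eq_or_lt with heq | hlt
    · exact ⟨u, o.pos_injective heq.symm, hvu, huv, 0, rfl⟩
    · have hpu := o.pos_parent_lt u hu
      obtain ⟨w, hw, hvw, hwv, k, hk⟩ := ih (o.parent u) hpu hlt (hpu.trans huv)
      exact ⟨w, hw, hvw, hwv, k + 1, hk⟩

lemma uncle_of_pos_lt (o : NoncrossingOrder G r) {u v : V} (hadj : G.Adj u v)
    (huv : o.pos u < o.pos v) :
    o.parent v = u ∨ ∃ w, Elder o.parent o.pos r w v ∧ Anc o.parent w u := by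
  have hv : v ≠ r := o.ne_root_of_pos_lt huv
  rcases (o.pos_parent_le v u hadj.symm huv).eq_or_lt with heq | hlt
  · exact Or.inl (o.pos_injective heq)
  · obtain ⟨w, hw, hvw, hwv, hwu⟩ := o.exists_sibling_anc hv hlt huv
    exact Or.inr
      ⟨w, ⟨o.ne_root_of_pos_lt hvw, hv, fun h => hwv.ne (h ▸ rfl), hw, hwv⟩, hwu⟩

theorem nonempty_uncleTree (o : NoncrossingOrder G r) : Nonempty (UncleTree G r) := by
  obtain ⟨depth, hdepth_root, hdepth_parent⟩ :=
    exists_depth_of_measure_lt o.parent r o.pos o.pos_parent_lt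
  refine ⟨⟨o.parent, o.pos, depth, o.parent_root, o.adj_parent, hdepth_root, hdepth_parent,
    fun u v _ _ _ h => o.pos_injective h, fun u v hadj => ?_⟩⟩
  rcases lt_trichotomy (o.pos u) (o.pos v) with h | h | h
  · rcases o.uncle_of_pos_lt hadj h with h' | h'
    · exact Or.inr (Or.inl h')
    · exact Or.inr (Or.inr (Or.inr h'))
  · exact absurd (o.pos_injective h) (G.ne_of_adj hadj)
  · rcases o.uncle_of_pos_lt hadj.symm h with h' | h'
    · exact Or.inl h'
    · exact Or.inr (Or.inr (Or.inl h'))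

end NoncrossingOrder

section GreedySearch

variable (G : SimpleGraph V) (r : V)

def IsFrontier (s : ℕ → V) (k : ℕ) (x : V) : Prop :=
  (∀ j < k, s j ≠ x) ∧ ∃ j < k, G.Adj (s j) x

noncomputable def firstAdjBefore (s : ℕ → V) (k : ℕ) (x : V) : ℕ :=
  sInf {j | j < k ∧ G.Adj (s j) x}

def IsGreedyChoice (s : ℕ → V) (k : ℕ) (x : V) : Prop :=
  IsFrontier G s k x ∧
    ∀ y, IsFrontier G s k y → firstAdjBefore G s k y ≤ firstAdjBefore G s k x

open Classical in
noncomputable def greedyNext (s : ℕ → V) (k : ℕ) : V :=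
  if h : ∃ x, IsGreedyChoice G s k x then h.choose else r

noncomputable def greedySeq (k : ℕ) : V :=
  greedyNext G r (fun j => if j < k then greedySeq j else r) k

variable {G r}

lemma greedyNext_congr {s s' : ℕ → V} {k : ℕ} (h : ∀ j < k, s j = s' j) :
    greedyNext G r s k = greedyNext G r s' k := by
  have hF : IsFrontier G s k = IsFrontier G s' k := by
    ext x
    exact and_congr (forall₂_congr fun j hj => by rw [h j hj])
      (exists_congr fun j => and_congr_right fun hj => by rw [h j hj])
  have hA : firstAdjBefore G s k = firstAdjBefore G s' k := by
    ext x
    exact congrArg sInf (Set.ext fun j => and_congr_right fun hj => by rw [h j hj])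
  have hC : IsGreedyChoice G s k = IsGreedyChoice G s' k := by
    unfold IsGreedyChoice
    rw [hF, hA]
  unfold greedyNext
  rw [hC]

lemma greedySeq_eq (k : ℕ) : greedySeq G r k = greedyNext G r (greedySeq G r) k := by
  rw [greedySeq]
  exact greedyNext_congr fun j hj => if_pos hj

lemma greedySeq_zero : greedySeq G r 0 = r := by
  rw [greedySeq_eq, greedyNext, dif_neg]
  rintro ⟨x, ⟨-, j, hj, -⟩, -⟩
  exact Nat.not_lt_zero j hj

lemma firstAdjBefore_spec {s : ℕ → V} {k : ℕ} {x : V} (h : ∃ j < k, G.Adj (s j) x) :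
    firstAdjBefore G s k x < k ∧ G.Adj (s (firstAdjBefore G s k x)) x :=
  Nat.sInf_mem (s := {j | j < k ∧ G.Adj (s j) x}) h

lemma firstAdjBefore_le {s : ℕ → V} {k j : ℕ} {x : V} (hj : j < k) (hadj : G.Adj (s j) x) :
    firstAdjBefore G s k x ≤ j :=
  Nat.sInf_le ⟨hj, hadj⟩

lemma firstAdjBefore_eq_of_le {s : ℕ → V} {k i : ℕ} {x : V} (hki : k ≤ i)
    (h : ∃ j < k, G.Adj (s j) x) : firstAdjBefore G s i x = firstAdjBefore G s k x := by
  obtain ⟨hlt, hadj⟩ := firstAdjBefore_spec h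
  obtain ⟨-, hadj'⟩ :=
    firstAdjBefore_spec (k := i) (h.imp fun j hj => ⟨hj.1.trans_le hki, hj.2⟩)
  have hle := firstAdjBefore_le (hlt.trans_le hki) hadj
  exact le_antisymm hle (firstAdjBefore_le (hle.trans_lt hlt) hadj')

lemma greedyNext_spec [Finite V] {s : ℕ → V} {k : ℕ} (h : ∃ x, IsFrontier G s k x) :
    IsGreedyChoice G s k (greedyNext G r s k) := by
  obtain ⟨x, hx, hmax⟩ := exists_max_image _ (firstAdjBefore G s k) (toFinite _) h
  have hex : ∃ x, IsGreedyChoice G s k x := ⟨x, hx, hmax⟩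
  rw [greedyNext, dif_pos hex]
  exact hex.choose_spec

lemma exists_isFrontier [Finite V] (hG : G.Preconnected) {s : ℕ → V} {k : ℕ} (hk0 : 0 < k)
    (hk : k < Nat.card V) (hinj : InjOn s (Iio k)) : ∃ x, IsFrontier G s k x := by
  have hS : s '' Iio k ≠ univ := by
    intro h
    have := congrArg ncard h
    rw [hinj.ncard_image, ncard_Iio_nat, ncard_univ] at this
    omega
  obtain ⟨v, hv⟩ := (ne_univ_iff_exists_notMem _).1 hS
  obtain ⟨p⟩ := hG (s 0) v
  obtain ⟨d, -, ⟨j, hj, hjd⟩, hd⟩ := p.exists_boundary_dart _ (mem_image_of_mem s hk0) hv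
  exact ⟨d.snd, fun i hi hid => hd ⟨i, hi, hid⟩, j, hj, hjd ▸ d.adj⟩

lemma isGreedyChoice_greedySeq_of_injOn [Finite V] (hG : G.Preconnected) {k : ℕ} (hk0 : 0 < k)
    (hk : k < Nat.card V) (hinj : InjOn (greedySeq G r) (Iio k)) :
    IsGreedyChoice G (greedySeq G r) k (greedySeq G r k) := by
  rw [greedySeq_eq]
  exact greedyNext_spec (exists_isFrontier hG hk0 hk hinj)

lemma greedySeq_injOn [Finite V] (hG : G.Preconnected) :
    ∀ k ≤ Nat.card V, InjOn (greedySeq G r) (Iio k) := by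
  intro k
  induction k with
  | zero => simp
  | succ k ih =>
    intro hk
    have hinj := ih (Nat.le_of_succ_le hk)
    rw [← Order.succ_eq_add_one, Order.Iio_succ_eq_insert, injOn_insert self_notMem_Iio]
    refine ⟨hinj, ?_⟩
    rcases Nat.eq_zero_or_pos k with rfl | hk0
    · simp
    · rintro ⟨j, hj, hjk⟩
      exact (isGreedyChoice_greedySeq_of_injOn hG hk0 hk hinj).1.1 j hj hjk

lemma isGreedyChoice_greedySeq [Finite V] (hG : G.Preconnected) {k : ℕ} (hk0 : 0 < k)
    (hk : k < Nat.card V) : IsGreedyChoice G (greedySeq G r) k (greedySeq G r k) :=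
  isGreedyChoice_greedySeq_of_injOn hG hk0 hk (greedySeq_injOn hG k hk.le)

lemma greedySeq_surjOn [Finite V] (hG : G.Preconnected) :
    SurjOn (greedySeq G r) (Iio (Nat.card V)) univ := by
  rw [SurjOn, univ_subset_iff]
  by_contra h
  have hlt := ncard_lt_card h
  rw [(greedySeq_injOn hG _ le_rfl).ncard_image, ncard_Iio_nat] at hlt
  exact hlt.false

variable (G r) in
noncomputable def greedyParentIdx (k : ℕ) : ℕ :=
  firstAdjBefore G (greedySeq G r) k (greedySeq G r k)

lemma greedyParentIdx_spec [Finite V] (hG : G.Preconnected) {k : ℕ} (hk0 : 0 < k)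
    (hk : k < Nat.card V) : greedyParentIdx G r k < k ∧
      G.Adj (greedySeq G r (greedyParentIdx G r k)) (greedySeq G r k) :=
  firstAdjBefore_spec (isGreedyChoice_greedySeq hG hk0 hk).1.2

lemma greedyParentIdx_le_of_lt [Finite V] (hG : G.Preconnected) {i k : ℕ}
    (hik : greedyParentIdx G r i < k) (hki : k < i) (hi : i < Nat.card V) :
    greedyParentIdx G r i ≤ greedyParentIdx G r k := by
  have hk0 : 0 < k := (Nat.zero_le _).trans_lt hik
  obtain ⟨⟨hnew, hadj⟩, -⟩ := isGreedyChoice_greedySeq (r := r) hG (hk0.trans hki) hi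
  have hadj_k : ∃ j < k, G.Adj (greedySeq G r j) (greedySeq G r i) :=
    ⟨_, hik, (firstAdjBefore_spec hadj).2⟩
  have hfront : IsFrontier G (greedySeq G r) k (greedySeq G r i) :=
    ⟨fun j hj => hnew j (hj.trans hki), hadj_k⟩
  -- `greedySeq G r i` was already a frontier vertex at step `k`, yet the greedy rule chose
  -- `greedySeq G r k`
  have hmax := (isGreedyChoice_greedySeq hG hk0 (hki.trans hi)).2 _ hfront
  rwa [← firstAdjBefore_eq_of_le hki.le hadj_k] at hmax

end GreedySearch

theorem nonempty_noncrossingOrder [Finite V] {G : SimpleGraph V} (hG : G.Preconnected) (r : V) :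
    Nonempty (NoncrossingOrder G r) := by
  choose pos hpos_lt hs_pos using fun v => greedySeq_surjOn (r := r) hG (mem_univ v)
  have hpos_s {k : ℕ} (hk : k < Nat.card V) : pos (greedySeq G r k) = k :=
    greedySeq_injOn hG _ le_rfl (hpos_lt _) hk (hs_pos _)
  have hpos_root : pos r = 0 :=
    greedySeq_zero (G := G) (r := r) ▸ hpos_s ((Nat.zero_le _).trans_lt (hpos_lt r))
  have hne_root {u v : V} (h : pos v < pos u) : u ≠ r := by
    rintro rfl
    omega
  have hparent {v : V} (hv : v ≠ r) : greedyParentIdx G r (pos v) < pos v ∧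
      G.Adj (greedySeq G r (greedyParentIdx G r (pos v))) v := by
    have hv0 : 0 < pos v :=
      Nat.pos_of_ne_zero fun h => hv (by rw [← hs_pos v, h, greedySeq_zero])
    simpa only [hs_pos] using greedyParentIdx_spec (r := r) hG hv0 (hpos_lt v)
  have hpos_parent {v : V} (hv : v ≠ r) :
      pos (greedySeq G r (greedyParentIdx G r (pos v))) = greedyParentIdx G r (pos v) :=
    hpos_s ((hparent hv).1.trans (hpos_lt v))
  refine ⟨{
    pos
    parent v := greedySeq G r (greedyParentIdx G r (pos v))
    pos_injective := LeftInverse.injective hs_pos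
    pos_root_le v := hpos_root ▸ Nat.zero_le _
    parent_root := ?_
    adj_parent v hv := (hparent hv).2.symm
    pos_parent_lt v hv := (hpos_parent hv).symm ▸ (hparent hv).1
    pos_parent_le := ?_
    noncrossing := ?_ }⟩
  · -- at the root `firstAdjBefore` is `sInf ∅ = 0`, so `r` gets the parent `greedySeq G r 0 = r`
    simp [greedyParentIdx, firstAdjBefore, hpos_root, greedySeq_zero]
  · intro v w hadj hwv
    rw [hpos_parent (hne_root hwv)]
    exact firstAdjBefore_le hwv (by rw [hs_pos, hs_pos]; exact hadj.symm)
  · intro u v hv hvu huv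
    have hu := hne_root hvu
    rw [hpos_parent hv] at hvu ⊢
    rw [hpos_parent hu]
    exact greedyParentIdx_le_of_lt hG hvu huv (hpos_lt v)

/-- Every finite connected simple graph `G` has, for every vertex
`r`, a spanning tree rooted at `r` with a linear order on the children of each
vertex which is an uncle tree of `G`. -/
theorem exists_uncleTree [Fintype V] (G : SimpleGraph V) (hG : G.Connected) (r : V) :
    Nonempty (UncleTree G r) :=
  let ⟨o⟩ := nonempty_noncrossingOrder hG.preconnected r
  o.nonempty_uncleTree
end

section
/- Let T be an uncle tree of a finite connected simple graph G, rooted at r. Then for every vertex v of G, the path of T from r to v is an induced path of G; that is, two vertices on this path are adjacent in G if and only if they are consecutive on the path. -/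
variable {V : Type}

/-! Depth drops by one along each tree edge, so two ancestors of a vertex with the same depth
coincide. Let `ab` be an edge of `G` with `b` a proper ancestor of `a`. If it is not the tree
edge `a — parent a`, the uncle condition leaves three cases: `parent b = a` closes a cycle of
the parent map; an elder sibling of `a` that is an ancestor of `b` is an ancestor of `a` of the
same depth as `a`; an elder sibling of `b` that is an ancestor of `a` is an ancestor of `a` of
the same depth as `b`. Each contradicts the uniqueness of ancestors of a given depth. -/

namespace Anc

variable {f : V → V} {a b c : V}

theorem refl (f : V → V) (a : V) : Anc f a a := ⟨0, rfl⟩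

theorem parent_self (f : V → V) (a : V) : Anc f (f a) a := ⟨1, rfl⟩

theorem trans (hab : Anc f a b) (hbc : Anc f b c) : Anc f a c := by
  obtain ⟨k, rfl⟩ := hab
  obtain ⟨m, rfl⟩ := hbc
  exact ⟨k + m, Function.iterate_add_apply f k m c⟩

theorem total (ha : Anc f a c) (hb : Anc f b c) : Anc f a b ∨ Anc f b a := by
  obtain ⟨k, rfl⟩ := ha
  obtain ⟨m, rfl⟩ := hb
  rcases le_total k m with hkm | hmk
  · exact Or.inr ⟨m - k, by rw [← Function.iterate_add_apply, Nat.sub_add_cancel hkm]⟩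
  · exact Or.inl ⟨k - m, by rw [← Function.iterate_add_apply, Nat.sub_add_cancel hmk]⟩

end Anc

namespace UncleTree

variable {G : SimpleGraph V} {r : V} (T : UncleTree G r)

theorem depth_parent_eq_sub (v : V) : T.depth (T.parent v) = T.depth v - 1 := by
  by_cases hv : v = r
  · subst hv
    rw [T.parent_root, T.depth_root]
  · rw [T.depth_parent v hv, Nat.add_sub_cancel]

theorem depth_iterate (k : ℕ) (v : V) : T.depth (T.parent^[k] v) = T.depth v - k := by
  induction k with
  | zero => rfl
  | succ k ih => rw [Function.iterate_succ_apply', depth_parent_eq_sub, ih, Nat.sub_sub]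

theorem depth_eq_zero_iff {v : V} : T.depth v = 0 ↔ v = r := by
  refine ⟨fun h => ?_, fun h => h ▸ T.depth_root⟩
  by_contra hv
  have := T.depth_parent v hv
  omega

variable {T}

theorem depth_le_of_anc {x v : V} (h : Anc T.parent x v) : T.depth x ≤ T.depth v := by
  obtain ⟨k, rfl⟩ := h
  rw [depth_iterate]
  exact Nat.sub_le _ _

theorem eq_of_anc_of_depth_eq {x y v : V} (hx : Anc T.parent x v) (hy : Anc T.parent y v)
    (hxy : T.depth x = T.depth y) : x = y := by
  by_cases h0 : T.depth x = 0
  · rw [T.depth_eq_zero_iff.1 h0, T.depth_eq_zero_iff.1 (hxy ▸ h0 : T.depth y = 0)]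
  obtain ⟨k, rfl⟩ := hx
  obtain ⟨m, rfl⟩ := hy
  simp only [depth_iterate] at hxy h0
  rw [show k = m by omega]

theorem anc_antisymm {x y : V} (hxy : Anc T.parent x y) (hyx : Anc T.parent y x) : x = y :=
  eq_of_anc_of_depth_eq hxy (Anc.refl _ y)
    (le_antisymm (depth_le_of_anc hxy) (depth_le_of_anc hyx))

theorem depth_eq_of_elder {w u : V} (h : Elder T.parent T.rank r w u) : T.depth w = T.depth u := by
  obtain ⟨hw, hu, -, hpar, -⟩ := h
  rw [T.depth_parent w hw, T.depth_parent u hu, hpar]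

theorem parent_eq_of_adj_of_anc {a b : V} (hab : G.Adj a b) (hba : Anc T.parent b a) :
    T.parent a = b := by
  rcases T.uncle a b hab with h | h | ⟨w, hwa, hwb⟩ | ⟨w, hwb, hwa⟩
  · exact h
  · exact absurd (anc_antisymm (h ▸ Anc.parent_self T.parent b) hba) hab.ne
  · exact absurd (eq_of_anc_of_depth_eq (hwb.trans hba) (Anc.refl _ a) (depth_eq_of_elder hwa))
      hwa.2.2.1
  · exact absurd (eq_of_anc_of_depth_eq hwa hba (depth_eq_of_elder hwb)) hwb.2.2.1

theorem adj_parent_of_parent_ne {a : V} (h : T.parent a ≠ a) : G.Adj a (T.parent a) :=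
  T.adj_parent a fun har => h (har ▸ T.parent_root)

end UncleTree

theorem uncleTree_rootPath_induced_general (G : SimpleGraph V)
    (r : V) (T : UncleTree G r) (v : V) :
    ∀ a b : V, Anc T.parent a v → Anc T.parent b v →
      (G.Adj a b ↔ a ≠ b ∧ (T.parent a = b ∨ T.parent b = a)) := by
  intro a b ha hb
  constructor
  · intro hab
    refine ⟨hab.ne, ?_⟩
    rcases ha.total hb with hab' | hba
    · exact Or.inr (UncleTree.parent_eq_of_adj_of_anc hab.symm hab')
    · exact Or.inl (UncleTree.parent_eq_of_adj_of_anc hab hba)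
  · rintro ⟨hne, rfl | rfl⟩
    · exact UncleTree.adj_parent_of_parent_ne hne.symm
    · exact (UncleTree.adj_parent_of_parent_ne hne).symm

/-- If `T` is an uncle tree of a finite connected simple graph `G`
rooted at `r`, then for every vertex `v`, the path of `T` from `r` to `v`
(i.e. the set of ancestors of `v`) is an induced path of `G`: two vertices on
this path are adjacent in `G` iff they are consecutive on the path (one is the
parent of the other). -/
theorem uncleTree_rootPath_induced [Fintype V] (G : SimpleGraph V) (hG : G.Connected)
    (r : V) (T : UncleTree G r) (v : V) :
    ∀ a b : V, Anc T.parent a v → Anc T.parent b v →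
      (G.Adj a b ↔ a ≠ b ∧ (T.parent a = b ∨ T.parent b = a)) :=
  uncleTree_rootPath_induced_general G r T v
end

section
/- Let H be a finite multigraph (loops allowed, no multiple edges) such that |N_H(h) ∩ N_H(h')| ≤ 1 for all distinct vertices h, h' of H. Let I = (G, L) be a reduced list H-colouring instance and let v be a vertex of G of degree d(v) in G. For h ∈ V(H), let C_h = {v' ∈ N_G(v) : L_{v'} ⊆ N_H(h)}. Then there is at most one h ∈ L_v for which |C_h| > d(v)/2. -/
/-! Two colours `h ≠ h'` of `L v` that are both large would make `C h` and `C h'` two subsets of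
`N_G(v)` of more than half its size, so they share a neighbour `v'`. Every colour of `L v'` is then
a common neighbour of `h` and `h'`, and `L v'` has at least two elements, contradicting
`|N_H(h) ∩ N_H(h')| ≤ 1`. -/

/-- `Finite α` is essential: `Set.ncard` is `0` on infinite sets, so `hR` alone says nothing. -/
theorem eq_of_two_le_card_of_forall_adj_both {α : Type*} [Finite α] {R : α → α → Prop}
    (hR : ∀ a b, a ≠ b → {x | R a x ∧ R b x}.ncard ≤ 1) {S : Finset α} (hS : 2 ≤ S.card)
    {a b : α} (ha : ∀ x ∈ S, R a x) (hb : ∀ x ∈ S, R b x) : a = b := by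
  by_contra hab
  have hsub : (S : Set α) ⊆ {x | R a x ∧ R b x} := fun x hx => ⟨ha x hx, hb x hx⟩
  have hcard : S.card ≤ {x | R a x ∧ R b x}.ncard := by
    rw [← Set.ncard_coe_finset]
    exact Set.ncard_le_ncard hsub
  have := hR a b hab
  omega

theorem at_most_one_large_colour_general {V VH : Type} [Fintype V] [DecidableEq V]
    [Fintype VH] [DecidableEq VH]
    (G : SimpleGraph V) [DecidableRel G.Adj]
    (HAdj : VH → VH → Prop) [DecidableRel HAdj]
    (hH : ∀ h h' : VH, h ≠ h' → ({x : VH | HAdj h x ∧ HAdj h' x} : Set VH).ncard ≤ 1)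
    (L : V → Finset VH) (hred : ∀ u : V, 2 ≤ (L u).card)
    (v : V) (C : VH → Finset V)
    (hC : ∀ h : VH, C h = (G.neighborFinset v).filter (fun v' => ∀ x ∈ L v', HAdj h x)) :
    ∀ h ∈ L v, ∀ h' ∈ L v,
      (G.degree v : ℝ) / 2 < ((C h).card : ℝ) →
      (G.degree v : ℝ) / 2 < ((C h').card : ℝ) → h = h' := by
  intro h _ h' _ hlarge hlarge'
  have hsub (k : VH) : C k ⊆ G.neighborFinset v := hC k ▸ Finset.filter_subset _ _
  have hsum : (G.neighborFinset v).card < (C h).card + (C h').card := by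
    rw [G.card_neighborFinset_eq_degree]
    exact_mod_cast (by linarith : (G.degree v : ℝ) < (C h).card + (C h').card)
  obtain ⟨v', hv'⟩ := Finset.inter_nonempty_of_card_lt_card_add_card (hsub h) (hsub h') hsum
  rw [Finset.mem_inter, hC, hC, Finset.mem_filter, Finset.mem_filter] at hv'
  exact eq_of_two_le_card_of_forall_adj_both hH (hred v') hv'.1.2 hv'.2.2

/-- Let `H` be a finite multigraph (loops allowed, no multiple
edges; encoded by its symmetric adjacency relation `HAdj`) such that
`|N_H(h) ∩ N_H(h')| ≤ 1` for all distinct vertices `h, h'` of `H`. Let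
`(G, L)` be a reduced list `H`-colouring instance and `v` a vertex of `G` of
degree `d(v)`. For `h ∈ V(H)` let `C h = {v' ∈ N_G(v) : L v' ⊆ N_H(h)}`.
Then there is at most one `h ∈ L v` with `|C h| > d(v)/2`. -/
theorem at_most_one_large_colour {V VH : Type} [Fintype V] [DecidableEq V]
    [Fintype VH] [DecidableEq VH]
    (G : SimpleGraph V) [DecidableRel G.Adj]
    (HAdj : VH → VH → Prop) [DecidableRel HAdj] (hsym : Symmetric HAdj)
    (hH : ∀ h h' : VH, h ≠ h' → ({x : VH | HAdj h x ∧ HAdj h' x} : Set VH).ncard ≤ 1)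
    (L : V → Finset VH) (hred : ∀ u : V, 2 ≤ (L u).card)
    (v : V) (C : VH → Finset V)
    (hC : ∀ h : VH, C h = (G.neighborFinset v).filter (fun v' => ∀ x ∈ L v', HAdj h x)) :
    ∀ h ∈ L v, ∀ h' ∈ L v,
      (G.degree v : ℝ) / 2 < ((C h).card : ℝ) →
      (G.degree v : ℝ) / 2 < ((C h').card : ℝ) → h = h' :=
  at_most_one_large_colour_general G HAdj hH L hred v C hC
end

section
/- Let m, y > 0 be real numbers and let c > 1/y. Define f(w) = e^{c√(w·log w)}. Then there exists n₀ ∈ ℕ such that f(n − 2) + m·f(n − y·√(n·log n)) ≤ f(n) for all natural numbers n ≥ n₀. -/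
open Real Filter

private lemma sqrt_diff_lower {v w : ℝ} (hv : 0 ≤ v) (hvw : v ≤ w) (hw : 0 < w) :
    (w - v) / (2 * Real.sqrt w) ≤ Real.sqrt w - Real.sqrt v := by
  have hA : 0 < Real.sqrt w := Real.sqrt_pos.mpr hw
  have hB : 0 ≤ Real.sqrt v := Real.sqrt_nonneg v
  have hA2 : Real.sqrt w ^ 2 = w := Real.sq_sqrt hw.le
  have hB2 : Real.sqrt v ^ 2 = v := Real.sq_sqrt hv
  rw [div_le_iff₀ (by positivity)]
  nlinarith [sq_nonneg (Real.sqrt w - Real.sqrt v)]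

private lemma exp_neg_le_one_sub_half {u : ℝ} (h0 : 0 ≤ u) (h1 : u ≤ 1) :
    Real.exp (-u) ≤ 1 - u / 2 := by
  have h := Real.add_one_le_exp u
  have hpos : (0:ℝ) < Real.exp u := Real.exp_pos u
  rw [Real.exp_neg, inv_eq_one_div, div_le_iff₀ hpos]
  nlinarith

set_option maxHeartbeats 1600000 in
/-- Let `m, y > 0` and `c > 1/y`, and let
`f w = exp (c * √(w * log w))`. Then there is an `n₀ ∈ ℕ` such that
`f (n − 2) + m * f (n − y * √(n * log n)) ≤ f n` for all naturals `n ≥ n₀`. -/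
theorem calculus_estimate (m y c : ℝ) (hm : 0 < m) (hy : 0 < y) (hc : 1 / y < c) :
    ∃ n₀ : ℕ, ∀ n : ℕ, n₀ ≤ n →
      Real.exp (c * Real.sqrt (((n : ℝ) - 2) * Real.log ((n : ℝ) - 2))) +
        m * Real.exp (c * Real.sqrt
          (((n : ℝ) - y * Real.sqrt ((n : ℝ) * Real.log (n : ℝ))) *
            Real.log ((n : ℝ) - y * Real.sqrt ((n : ℝ) * Real.log (n : ℝ))))) ≤
      Real.exp (c * Real.sqrt ((n : ℝ) * Real.log (n : ℝ))) := by
  have hc0 : 0 < c := lt_trans (by positivity) hc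
  have hcy1 : 1 < c * y := by
    rw [div_lt_iff₀ hy] at hc; linarith
  have hk : 0 < (c * y - 1) / 2 := by linarith
  -- tendsto facts
  have hr0 : Tendsto (fun x : ℝ => Real.sqrt (Real.log x / x)) atTop (nhds 0) := by
    have h1 : Tendsto (fun x : ℝ => Real.log x / x) atTop (nhds 0) :=
      Real.isLittleO_log_id_atTop.tendsto_div_nhds_zero
    have h2 : Tendsto Real.sqrt (nhds 0) (nhds 0) := by
      simpa using (Real.continuous_sqrt.tendsto 0)
    exact h2.comp h1
  have hE2 : ∀ᶠ x : ℝ in atTop, y * Real.sqrt (Real.log x / x) < 1 / 2 := by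
    have := hr0.const_mul y
    rw [mul_zero] at this
    exact this.eventually_lt_const (by norm_num)
  have hE3 : ∀ᶠ x : ℝ in atTop, c * Real.sqrt (Real.log x / x) < 2 := by
    have := hr0.const_mul c
    rw [mul_zero] at this
    exact this.eventually_lt_const (by norm_num)
  have hE4 : ∀ᶠ x : ℝ in atTop,
      m * Real.exp (-((c * y - 1) / 2 * Real.log x)) < c / 4 := by
    have h1 : Tendsto (fun x : ℝ => (c * y - 1) / 2 * Real.log x) atTop atTop :=
      Real.tendsto_log_atTop.const_mul_atTop hk
    have h2 : Tendsto (fun x : ℝ => Real.exp (-((c * y - 1) / 2 * Real.log x)))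
        atTop (nhds 0) := Real.tendsto_exp_neg_atTop_nhds_zero.comp h1
    have := h2.const_mul m
    rw [mul_zero] at this
    exact this.eventually_lt_const (by positivity)
  have hmain : ∀ᶠ x : ℝ in atTop,
      Real.exp (c * Real.sqrt ((x - 2) * Real.log (x - 2))) +
        m * Real.exp (c * Real.sqrt
          ((x - y * Real.sqrt (x * Real.log x)) *
            Real.log (x - y * Real.sqrt (x * Real.log x)))) ≤
      Real.exp (c * Real.sqrt (x * Real.log x)) := by
    filter_upwards [eventually_ge_atTop (4:ℝ), hE2, hE3, hE4] with x hx4 h2 h3 h4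
    have hx0 : (0:ℝ) < x := by linarith
    set L : ℝ := Real.log x with hLdef
    have hL1 : 1 ≤ L := by
      rw [hLdef, Real.le_log_iff_exp_le hx0]
      calc Real.exp 1 ≤ 2.7182818286 := Real.exp_one_lt_d9.le
        _ ≤ x := by linarith
    have hL0 : 0 ≤ L := by linarith
    have hxL : 0 < x * L := by nlinarith
    set s : ℝ := Real.sqrt (x * L) with hsdef
    have hs0 : 0 < s := Real.sqrt_pos.mpr hxL
    set r : ℝ := Real.sqrt (L / x) with hrdef
    have hr0' : 0 ≤ r := Real.sqrt_nonneg _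
    -- identities
    have hsr : s * r = L := by
      rw [hsdef, hrdef, ← Real.sqrt_mul hxL.le]
      rw [show x * L * (L / x) = L ^ 2 by field_simp]
      exact Real.sqrt_sq hL0
    have hsxr : s = x * r := by
      rw [hrdef, hsdef]
      rw [show x * Real.sqrt (L / x) = Real.sqrt (x ^ 2) * Real.sqrt (L / x) by
        rw [Real.sqrt_sq hx0.le]]
      rw [← Real.sqrt_mul (by positivity)]
      congr 1
      field_simp
    -- bounds on a and b
    set b : ℝ := x - 2 with hbdef
    set a : ℝ := x - y * s with hadef
    have hb2 : 2 ≤ b := by rw [hbdef]; linarith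
    have hb0 : 0 < b := by linarith
    have ha2 : 2 ≤ a := by
      rw [hadef, hsxr]
      nlinarith [h2]
    have ha0 : 0 < a := by linarith
    have hax : a ≤ x := by
      rw [hadef]
      nlinarith [hs0.le]
    -- log bounds
    have hlogb_le : Real.log b ≤ L := Real.log_le_log hb0 (by rw [hbdef]; linarith)
    have hloga_le : Real.log a ≤ L := Real.log_le_log ha0 hax
    have hloga0 : 0 ≤ Real.log a := Real.log_nonneg (by linarith)
    have hlogb0 : 0 ≤ Real.log b := Real.log_nonneg (by linarith)
    -- √x ≤ b, so L/2 ≤ log b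
    have hsqx : Real.sqrt x ≤ b := by
      have hA2 : Real.sqrt x ^ 2 = x := Real.sq_sqrt hx0.le
      have hA0 : 0 ≤ Real.sqrt x := Real.sqrt_nonneg x
      have hA2' : 2 ≤ Real.sqrt x := by nlinarith
      rw [hbdef]; nlinarith
    have hlogb_half : L / 2 ≤ Real.log b := by
      have := Real.log_le_log (Real.sqrt_pos.mpr hx0) hsqx
      rwa [Real.log_sqrt hx0.le] at this
    -- first increment bound: √(b log b) ≤ s - L/(2s)
    have hbx : b ≤ x := by rw [hbdef]; linarith
    have hbL : b * Real.log b ≤ x * L := mul_le_mul hbx hlogb_le hlogb0 hx0.le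
    have hbL0 : 0 ≤ b * Real.log b := by positivity
    have hbexp : b * Real.log b = x * Real.log b - 2 * Real.log b := by
      rw [hbdef]; ring
    have hxlogb : x * Real.log b ≤ x * L := mul_le_mul_of_nonneg_left hlogb_le hx0.le
    have hnum1 : L ≤ x * L - b * Real.log b := by
      rw [hbexp]; linarith
    have hinc1 : Real.sqrt (b * Real.log b) ≤ s - L / (2 * s) := by
      have h5 := sqrt_diff_lower hbL0 hbL hxL
      rw [← hsdef] at h5
      have h6 : L / (2 * s) ≤ (x * L - b * Real.log b) / (2 * s) := by
        gcongr
      linarith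
    -- second increment bound: √(a log a) ≤ s - y*L/2
    have haL : a * Real.log a ≤ x * L := mul_le_mul hax hloga_le hloga0 hx0.le
    have haL0 : 0 ≤ a * Real.log a := by positivity
    have haL2 : a * Real.log a ≤ a * L := mul_le_mul_of_nonneg_left hloga_le ha0.le
    have haexp : a * L = x * L - y * s * L := by rw [hadef]; ring
    have hnum2 : y * s * L ≤ x * L - a * Real.log a := by linarith
    have hinc2 : Real.sqrt (a * Real.log a) ≤ s - y * L / 2 := by
      have h5 := sqrt_diff_lower haL0 haL hxL
      rw [← hsdef] at h5
      have h6 : y * s * L / (2 * s) ≤ (x * L - a * Real.log a) / (2 * s) := by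
        gcongr
      have h7 : y * s * L / (2 * s) = y * L / 2 := by
        field_simp
      linarith
    -- set q
    set q : ℝ := c * L / (2 * s) with hqdef
    have hq0 : 0 ≤ q := by positivity
    have hqr : q = c * r / 2 := by
      rw [hqdef]
      have : L = s * r := hsr.symm
      rw [this]
      field_simp
    have hq1 : q ≤ 1 := by rw [hqr]; linarith
    -- first exponential bound
    have hexp1 : Real.exp (c * Real.sqrt (b * Real.log b)) ≤
        Real.exp (c * s) * (1 - q / 2) := by
      have h5 : c * Real.sqrt (b * Real.log b) ≤ c * s - q := by
        have h8 := mul_le_mul_of_nonneg_left hinc1 hc0.le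
        have h9 : c * (s - L / (2 * s)) = c * s - c * L / (2 * s) := by ring
        rw [hqdef]
        linarith only [h8, h9]
      calc Real.exp (c * Real.sqrt (b * Real.log b)) ≤ Real.exp (c * s - q) :=
            Real.exp_le_exp.mpr h5
        _ = Real.exp (c * s) * Real.exp (-q) := by
            rw [show c * s - q = c * s + -q by ring, Real.exp_add]
        _ ≤ Real.exp (c * s) * (1 - q / 2) := by
            have := exp_neg_le_one_sub_half hq0 hq1
            exact mul_le_mul_of_nonneg_left this (Real.exp_pos _).le
    -- second exponential bound
    have hxr : (1:ℝ) / Real.sqrt x ≤ r := by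
      have h5 : Real.sqrt (1 / x) ≤ Real.sqrt (L / x) := by
        gcongr
      rwa [one_div, Real.sqrt_inv, ← one_div] at h5
    have hexpL : Real.exp (-(L / 2)) = 1 / Real.sqrt x := by
      have h5 : Real.sqrt x = Real.exp (L / 2) := by
        rw [← Real.log_sqrt hx0.le, Real.exp_log (Real.sqrt_pos.mpr hx0)]
      rw [h5, Real.exp_neg, one_div]
    have hsmall : m * Real.exp (-(c * y * L / 2)) ≤ q / 2 := by
      have h5 : m * Real.exp (-(c * y * L / 2)) =
          m * Real.exp (-((c * y - 1) / 2 * L)) * Real.exp (-(L / 2)) := by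
        have harg : -(c * y * L / 2) = -((c * y - 1) / 2 * L) + -(L / 2) := by
          ring
        rw [harg, Real.exp_add, mul_assoc]
      rw [h5, hexpL]
      have h6 : m * Real.exp (-((c * y - 1) / 2 * L)) * (1 / Real.sqrt x) ≤
          (c / 4) * (1 / Real.sqrt x) := by
        have hxp : (0:ℝ) < 1 / Real.sqrt x := by positivity
        exact mul_le_mul_of_nonneg_right h4.le hxp.le
      have h7 : (c / 4) * (1 / Real.sqrt x) ≤ (c / 4) * r :=
        mul_le_mul_of_nonneg_left hxr (by positivity)
      rw [hqr]
      linarith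
    have hexp2 : m * Real.exp (c * Real.sqrt (a * Real.log a)) ≤
        Real.exp (c * s) * (q / 2) := by
      have h5 : c * Real.sqrt (a * Real.log a) ≤ c * s - c * y * L / 2 := by
        have h8 := mul_le_mul_of_nonneg_left hinc2 hc0.le
        have h9 : c * (s - y * L / 2) = c * s - c * y * L / 2 := by ring
        linarith only [h8, h9]
      calc m * Real.exp (c * Real.sqrt (a * Real.log a))
          ≤ m * Real.exp (c * s - c * y * L / 2) := by
            exact mul_le_mul_of_nonneg_left (Real.exp_le_exp.mpr h5) hm.le
        _ = Real.exp (c * s) * (m * Real.exp (-(c * y * L / 2))) := by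
            rw [show c * s - c * y * L / 2 = c * s + -(c * y * L / 2) by ring,
              Real.exp_add]
            ring
        _ ≤ Real.exp (c * s) * (q / 2) :=
            mul_le_mul_of_nonneg_left hsmall (Real.exp_pos _).le
    -- combine
    have hfinal : Real.exp (c * Real.sqrt (b * Real.log b)) +
        m * Real.exp (c * Real.sqrt (a * Real.log a)) ≤ Real.exp (c * s) := by
      linarith only [hexp1, hexp2]
    exact hfinal
  obtain ⟨X, hX⟩ := Filter.eventually_atTop.mp hmain
  refine ⟨⌈X⌉₊, fun n hn => hX n ?_⟩
  calc X ≤ (⌈X⌉₊ : ℝ) := Nat.le_ceil X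
    _ ≤ (n : ℝ) := Nat.cast_le.mpr hn
end

section
/- Let c > 0 and define f(w) = 2^{c√(w·log w)}. Then there exists n₀ ∈ ℕ such that f(k) + f(ℓ) + 1 ≤ f(k + ℓ) for all natural numbers k, ℓ ≥ n₀. -/
/-!
Write `φ w = 2 ^ (c √w)`. Since `log (φ w / w) = c log 2 · √w - 2 log √w`, the ratio `φ w / w` is
nondecreasing for `w ≥ T := (2 / (c log 2))²`, and a function whose ratio to the identity is
nondecreasing is superadditive there. For `2 ≤ ℓ ≤ k` with `ℓ log 2 ≥ T` this gives
`φ (k log k) + φ (ℓ log ℓ) + 1 ≤ φ (k log k) + φ (ℓ log ℓ) + φ (ℓ log 2) ≤ φ (k log k + ℓ log ℓ + ℓ log 2)`,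
and the last argument is at most `(k + ℓ) log (k + ℓ)` because `2ℓ ≤ k + ℓ`.
-/

open Real Set

theorem add_le_of_monotoneOn_div {φ : ℝ → ℝ} {T : ℝ} (hT : 0 < T)
    (hφ : MonotoneOn (fun y => φ y / y) (Ici T)) {a b : ℝ} (ha : T ≤ a) (hb : T ≤ b) :
    φ a + φ b ≤ φ (a + b) := by
  have ha0 : 0 < a := hT.trans_le ha
  have hb0 : 0 < b := hT.trans_le hb
  have hab : T ≤ a + b := by linarith
  have hA : φ a / a ≤ φ (a + b) / (a + b) := hφ ha hab (by linarith)
  have hB : φ b / b ≤ φ (a + b) / (a + b) := hφ hb hab (by linarith)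
  calc φ a + φ b = a * (φ a / a) + b * (φ b / b) := by field_simp
    _ ≤ a * (φ (a + b) / (a + b)) + b * (φ (a + b) / (a + b)) := by gcongr
    _ = φ (a + b) := by field_simp

theorem monotoneOn_mul_sub_two_mul_log {a : ℝ} (ha : 0 < a) :
    MonotoneOn (fun t => a * t - 2 * log t) (Ici (2 / a)) := by
  intro v hv u _ hvu
  rw [mem_Ici] at hv
  have hv0 : 0 < v := (div_pos two_pos ha).trans_le hv
  have hav : 2 ≤ a * v := by rwa [div_le_iff₀' ha] at hv
  -- `log u - log v ≤ u / v - 1`, and `2 / v ≤ a`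
  have hlog : (log u - log v) * v ≤ u - v := by
    have h := log_le_sub_one_of_pos (div_pos (hv0.trans_le hvu) hv0)
    rw [log_div (hv0.trans_le hvu).ne' hv0.ne', le_sub_iff_add_le, div_eq_mul_inv] at h
    have := mul_le_mul_of_nonneg_right h hv0.le
    field_simp at this
    linarith
  show a * v - 2 * log v ≤ a * u - 2 * log u
  nlinarith [sub_nonneg.mpr hvu]

theorem two_rpow_mul_sqrt_div_eq {c y : ℝ} (hy : 0 < y) :
    (2 : ℝ) ^ (c * √y) / y = exp (c * log 2 * √y - 2 * log √y) := by
  rw [log_sqrt hy.le, mul_div_cancel₀ _ two_ne_zero, exp_sub, exp_log hy, rpow_def_of_pos two_pos]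
  ring_nf

theorem monotoneOn_two_rpow_mul_sqrt_div {c : ℝ} (hc : 0 < c) :
    MonotoneOn (fun y => (2 : ℝ) ^ (c * √y) / y) (Ici ((2 / (c * log 2)) ^ 2)) := by
  have ha : 0 < c * log 2 := mul_pos hc (log_pos one_lt_two)
  have hT : 0 < (2 / (c * log 2)) ^ 2 := by positivity
  have hmaps : MapsTo sqrt (Ici ((2 / (c * log 2)) ^ 2)) (Ici (2 / (c * log 2))) := by
    intro y hy
    simpa [sqrt_sq (by positivity : (0:ℝ) ≤ 2 / (c * log 2))] using sqrt_le_sqrt hy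
  have hmono := (exp_monotone.comp_monotoneOn (monotoneOn_mul_sub_two_mul_log ha)).comp
    (sqrt_monotone.monotoneOn _) hmaps
  refine hmono.congr fun y hy => ?_
  exact (two_rpow_mul_sqrt_div_eq (hT.trans_le hy)).symm

theorem mul_log_add_mul_log_add_mul_log_two_le {x y : ℝ} (hy : 0 < y) (hyx : y ≤ x) :
    x * log x + y * log y + y * log 2 ≤ (x + y) * log (x + y) := by
  have hx : 0 < x := hy.trans_le hyx
  have hlx : log x ≤ log (x + y) := log_le_log hx (by linarith)
  have hly : log 2 + log y ≤ log (x + y) := by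
    rw [← log_mul two_ne_zero hy.ne']
    exact log_le_log (by positivity) (by linarith)
  nlinarith

theorem two_rpow_mul_sqrt_mul_log_add_le {c x y : ℝ} (hc : 0 < c) (hy : 2 ≤ y)
    (hyT : (2 / (c * log 2)) ^ 2 ≤ y * log 2) (hyx : y ≤ x) :
    (2 : ℝ) ^ (c * √(x * log x)) + (2 : ℝ) ^ (c * √(y * log y)) + 1 ≤
      (2 : ℝ) ^ (c * √((x + y) * log (x + y))) := by
  let φ : ℝ → ℝ := fun w => (2 : ℝ) ^ (c * √w)
  show φ _ + φ _ + 1 ≤ φ _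
  have hT : 0 < (2 / (c * log 2)) ^ 2 := by
    have := log_pos one_lt_two
    positivity
  have hlog : y * log 2 ≤ y * log y := by gcongr
  have hxT : (2 / (c * log 2)) ^ 2 ≤ x * log x := by
    have : 0 ≤ log y := log_nonneg (by linarith)
    have : y * log y ≤ x * log x := by gcongr; linarith
    linarith
  have hsuper : ∀ a b, (2 / (c * log 2)) ^ 2 ≤ a → (2 / (c * log 2)) ^ 2 ≤ b →
      φ a + φ b ≤ φ (a + b) := fun _ _ =>
    add_le_of_monotoneOn_div hT (monotoneOn_two_rpow_mul_sqrt_div hc)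
  calc φ (x * log x) + φ (y * log y) + 1
      ≤ φ (x * log x) + φ (y * log y) + φ (y * log 2) := by
        gcongr
        exact one_le_rpow one_le_two (by positivity)
    _ ≤ φ (x * log x + y * log y + y * log 2) := by
        grw [hsuper _ _ hxT (hyT.trans hlog)]
        exact hsuper _ _ (by linarith) hyT
    _ ≤ φ ((x + y) * log (x + y)) := by
        refine rpow_le_rpow_of_exponent_le one_le_two ?_
        gcongr
        exact mul_log_add_mul_log_add_mul_log_two_le (by linarith) hyx

/-- Let `c > 0` and `f w = 2 ^ (c * √(w * log w))`. Then there is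
an `n₀ ∈ ℕ` such that `f k + f ℓ + 1 ≤ f (k + ℓ)` for all naturals `k, ℓ ≥ n₀`. -/
theorem superadditive_estimate (c : ℝ) (hc : 0 < c) :
    ∃ n₀ : ℕ, ∀ k l : ℕ, n₀ ≤ k → n₀ ≤ l →
      (2 : ℝ) ^ (c * Real.sqrt ((k : ℝ) * Real.log (k : ℝ))) +
        (2 : ℝ) ^ (c * Real.sqrt ((l : ℝ) * Real.log (l : ℝ))) + 1 ≤
      (2 : ℝ) ^ (c * Real.sqrt (((k : ℝ) + (l : ℝ)) * Real.log ((k : ℝ) + (l : ℝ)))) := by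
  refine ⟨⌈(2 / (c * log 2)) ^ 2 / log 2⌉₊ + 2, fun k l hk hl => ?_⟩
  wlog hlk : l ≤ k generalizing k l
  · rw [add_comm (k : ℝ)]
    linarith [this l k hl hk (by omega)]
  have hl2 : (2 : ℝ) ≤ l := by exact_mod_cast (by omega : 2 ≤ l)
  have hlT : (2 / (c * log 2)) ^ 2 ≤ l * log 2 := by
    rw [← div_le_iff₀ (log_pos one_lt_two)]
    exact (Nat.le_ceil _).trans (by exact_mod_cast (by omega : _ ≤ l))
  exact two_rpow_mul_sqrt_mul_log_add_le hc hl2 hlT (by exact_mod_cast hlk)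
end

section
/- Let c > 0 and define f(w) = 2^{c√(w·log w)}. Then there exists n₀ ∈ ℕ such that f(k) + (w − k) + 1 ≤ f(w) for all natural numbers w ≥ n₀ and all natural numbers k < w. -/
open Real Filter

lemma nat_mul_log_nonneg (k : ℕ) : 0 ≤ (k:ℝ) * Real.log k := by
  rcases Nat.eq_zero_or_pos k with h | h
  · simp [h]
  · exact mul_nonneg (by positivity) (Real.log_nonneg (by exact_mod_cast h))

lemma mul_log_mono {k m : ℕ} (h : k ≤ m) : (k:ℝ) * Real.log k ≤ (m:ℝ) * Real.log m := by
  rcases Nat.lt_or_ge k 2 with hk | hk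
  · have : (k:ℝ) * Real.log k = 0 := by
      interval_cases k <;> simp
    rw [this]; exact nat_mul_log_nonneg m
  · have h2 : (2:ℝ) ≤ (k:ℝ) := by exact_mod_cast hk
    refine mul_le_mul (by exact_mod_cast h) (Real.log_le_log (by linarith) (by exact_mod_cast h))
      (Real.log_nonneg (by linarith)) (by positivity)

set_option maxHeartbeats 1000000 in
/-- Let `c > 0` and `f w = 2 ^ (c * √(w * log w))`. Then there is
an `n₀ ∈ ℕ` such that `f k + (w − k) + 1 ≤ f w` for all naturals `w ≥ n₀` and
all naturals `k < w`. -/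
theorem linear_slack_estimate (c : ℝ) (hc : 0 < c) :
    ∃ n₀ : ℕ, ∀ w k : ℕ, n₀ ≤ w → k < w →
      (2 : ℝ) ^ (c * Real.sqrt ((k : ℝ) * Real.log (k : ℝ))) + ((w : ℝ) - (k : ℝ)) + 1 ≤
      (2 : ℝ) ^ (c * Real.sqrt ((w : ℝ) * Real.log (w : ℝ))) := by
  set L := Real.log 2 with hLdef
  have hL : 0 < L := Real.log_pos one_lt_two
  have hcL : 0 < c * L := mul_pos hc hL
  -- tendsto setup
  have hsqrt : Tendsto Real.sqrt atTop atTop := by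
    rw [show Real.sqrt = fun x : ℝ => x ^ (1/2:ℝ) from funext fun x => Real.sqrt_eq_rpow x]
    exact tendsto_rpow_atTop (by norm_num)
  have hw1 : Tendsto (fun w : ℕ => (w:ℝ) - 1) atTop atTop := by
    simp only [sub_eq_add_neg]
    exact tendsto_atTop_add_const_right atTop (-1) tendsto_natCast_atTop_atTop
  have hs : Tendsto (fun w : ℕ => c * L * Real.sqrt ((w:ℝ) - 1)) atTop atTop :=
    (hsqrt.comp hw1).const_mul_atTop hcL
  have hdiv : Tendsto (fun s : ℝ => Real.exp s / s ^ 4) atTop atTop :=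
    Real.tendsto_exp_div_pow_atTop 4
  have hev : ∀ᶠ w : ℕ in atTop,
      16 / (c*L)^5 ≤ Real.exp (c * L * Real.sqrt ((w:ℝ)-1)) / (c * L * Real.sqrt ((w:ℝ)-1))^4 :=
    (hdiv.comp hs).eventually_ge_atTop _
  have hev2 : ∀ᶠ w : ℕ in atTop, 0 < c * L * Real.sqrt ((w:ℝ)-1) :=
    hs.eventually_gt_atTop 0
  obtain ⟨N, hN⟩ := (hev.and hev2).exists_forall_of_atTop
  refine ⟨max N 5, fun w k hw hk => ?_⟩
  have hw5 : (5:ℕ) ≤ w := le_trans (le_max_right _ _) hw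
  obtain ⟨hN1, hN2⟩ := hN w (le_trans (le_max_left _ _) hw)
  set m : ℕ := w - 1 with hm
  have hmw : (m:ℝ) = (w:ℝ) - 1 := by
    rw [hm, Nat.cast_sub (by omega)]; norm_num
  have hw5R : (5:ℝ) ≤ (w:ℝ) := by exact_mod_cast hw5
  have hm4 : (4:ℝ) ≤ (m:ℝ) := by rw [hmw]; linarith
  -- log bounds
  have hlogw : 1 ≤ Real.log w := by
    rw [Real.le_log_iff_exp_le (by linarith)]
    calc Real.exp 1 ≤ 2.7182818286 := Real.exp_one_lt_d9.le
    _ ≤ (w:ℝ) := by linarith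
  have hlogm : 1 ≤ Real.log m := by
    rw [Real.le_log_iff_exp_le (by linarith)]
    calc Real.exp 1 ≤ 2.7182818286 := Real.exp_one_lt_d9.le
    _ ≤ (m:ℝ) := by linarith
  set A := Real.sqrt ((k:ℝ) * Real.log k) with hA
  set B := Real.sqrt ((m:ℝ) * Real.log m) with hB
  set C := Real.sqrt ((w:ℝ) * Real.log w) with hC
  have hApos : 0 ≤ A := Real.sqrt_nonneg _
  have hBpos : 0 ≤ B := Real.sqrt_nonneg _
  have hCpos : 0 ≤ C := Real.sqrt_nonneg _
  have hAB : A ≤ B := Real.sqrt_le_sqrt (mul_log_mono (by omega))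
  have hBC : B ≤ C := Real.sqrt_le_sqrt (mul_log_mono (by omega))
  have hB2 : B^2 = (m:ℝ) * Real.log m := Real.sq_sqrt (nat_mul_log_nonneg m)
  have hC2 : C^2 = (w:ℝ) * Real.log w := Real.sq_sqrt (nat_mul_log_nonneg w)
  have hsw : Real.sqrt (w:ℝ) > 0 := Real.sqrt_pos.mpr (by linarith)
  have hslw : 1 ≤ Real.sqrt (Real.log w) := by
    rw [show (1:ℝ) = Real.sqrt 1 by simp]
    exact Real.sqrt_le_sqrt hlogw
  -- C ≤ √w * √(log w)
  have hCle : C = Real.sqrt (w:ℝ) * Real.sqrt (Real.log w) :=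
    Real.sqrt_mul (by linarith) _
  -- C - B ≥ 1/(2√w)
  have hgap : 1 / (2 * Real.sqrt (w:ℝ)) ≤ C - B := by
    have h1 : C^2 - B^2 ≥ Real.log w := by
      have : (m:ℝ) * Real.log m ≤ (m:ℝ) * Real.log w := by
        refine mul_le_mul_of_nonneg_left (Real.log_le_log (by linarith) ?_) (by linarith)
        rw [hmw]; linarith
      rw [hB2, hC2]; nlinarith [hmw]
    have hlw : Real.sqrt (Real.log w) ^ 2 = Real.log w :=
      Real.sq_sqrt (by linarith)
    rw [div_le_iff₀ (by positivity)]
    nlinarith [sq_nonneg (Real.sqrt (Real.log w) - 1), mul_pos hsw (lt_of_lt_of_le one_pos hslw)]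
  -- rewrite rpow as exp
  have hrpow : ∀ x : ℝ, (2:ℝ) ^ x = Real.exp (L * x) := fun x =>
    Real.rpow_def_of_pos two_pos x
  -- main superlinearity bound: 2^(cB) ≥ (16/(cL)) * m^2
  have hBm : Real.sqrt (m:ℝ) ≤ B := by
    apply Real.sqrt_le_sqrt; nlinarith
  have hexpB : (16 / (c*L)) * (m:ℝ)^2 ≤ Real.exp (L * (c * B)) := by
    have hsm2 : Real.sqrt (m:ℝ) ^ 2 = (m:ℝ) := Real.sq_sqrt (by linarith)
    have key : 16 / (c*L)^5 * (c * L * Real.sqrt ((w:ℝ)-1))^4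
        ≤ Real.exp (c * L * Real.sqrt ((w:ℝ)-1)) := by
      rw [le_div_iff₀ (by positivity)] at hN1
      linarith [hN1]
    have hrw : (c * L * Real.sqrt ((w:ℝ)-1))^4 = (c*L)^4 * (m:ℝ)^2 := by
      rw [← hmw, mul_pow, show (Real.sqrt (m:ℝ))^4 = ((Real.sqrt (m:ℝ))^2)^2 by ring, hsm2]
    have h16 : 16 / (c*L)^5 * ((c*L)^4 * (m:ℝ)^2) = (16 / (c*L)) * (m:ℝ)^2 := by
      field_simp
    rw [hrw, h16] at key
    refine le_trans key (Real.exp_le_exp.mpr ?_)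
    rw [← hmw]
    calc c * L * Real.sqrt (m:ℝ) ≤ c * L * B := by
          exact mul_le_mul_of_nonneg_left hBm (le_of_lt hcL)
    _ = L * (c * B) := by ring
  -- 2^(cC) ≥ 2^(cB) + 2^(cB) * cL/(2√w)
  have hstep : Real.exp (L * (c * B)) * (1 + c * L / (2 * Real.sqrt (w:ℝ)))
      ≤ Real.exp (L * (c * C)) := by
    have : Real.exp (L * (c * C)) = Real.exp (L * (c * B)) * Real.exp (L * c * (C - B)) := by
      rw [← Real.exp_add]; ring_nf
    rw [this]
    refine mul_le_mul_of_nonneg_left ?_ (le_of_lt (Real.exp_pos _))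
    have h1 : L * c * (C - B) + 1 ≤ Real.exp (L * c * (C - B)) := Real.add_one_le_exp _
    have h2 : c * L / (2 * Real.sqrt (w:ℝ)) ≤ L * c * (C - B) := by
      have h3 := mul_le_mul_of_nonneg_left hgap (le_of_lt (mul_pos hL hc))
      calc c * L / (2 * Real.sqrt (w:ℝ)) = L * c * (1 / (2 * Real.sqrt (w:ℝ))) := by ring
      _ ≤ L * c * (C - B) := h3
    linarith
  -- final combination
  have hwkR : (w:ℝ) - (k:ℝ) ≤ (w:ℝ) := by
    have : (0:ℝ) ≤ (k:ℝ) := by positivity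
    linarith
  have hAB2 : (2:ℝ) ^ (c * A) ≤ (2:ℝ) ^ (c * B) :=
    Real.rpow_le_rpow_of_exponent_le one_le_two
      (mul_le_mul_of_nonneg_left hAB (le_of_lt hc))
  -- f(w-1) * cL/(2√w) ≥ w + 1
  have hbig : (w:ℝ) + 1 ≤ Real.exp (L * (c * B)) * (c * L / (2 * Real.sqrt (w:ℝ))) := by
    have hsq : Real.sqrt (w:ℝ) ≤ (w:ℝ) := by
      nlinarith [Real.sq_sqrt (show (0:ℝ) ≤ (w:ℝ) by positivity), Real.sqrt_nonneg (w:ℝ),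
        sq_nonneg (Real.sqrt (w:ℝ) - 1)]
    have h1 : (16 / (c*L)) * (m:ℝ)^2 * (c * L / (2 * Real.sqrt (w:ℝ)))
        ≤ Real.exp (L * (c * B)) * (c * L / (2 * Real.sqrt (w:ℝ))) := by
      exact mul_le_mul_of_nonneg_right hexpB (by positivity)
    refine le_trans ?_ h1
    have hexpand : (16 / (c*L)) * (m:ℝ)^2 * (c * L / (2 * Real.sqrt (w:ℝ)))
        = 8 * (m:ℝ)^2 / Real.sqrt (w:ℝ) := by
      field_simp; ring
    rw [hexpand, le_div_iff₀ hsw]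
    -- need (w+1)·√w ≤ 8 m², with √w ≤ w, m ≥ w-1 ≥ 4, w ≥ 5
    have : ((w:ℝ) + 1) * Real.sqrt (w:ℝ) ≤ ((w:ℝ)+1) * (w:ℝ) :=
      mul_le_mul_of_nonneg_left hsq (by linarith)
    nlinarith [hmw]
  calc (2:ℝ) ^ (c * A) + ((w:ℝ) - (k:ℝ)) + 1
      ≤ (2:ℝ) ^ (c * B) + (w:ℝ) + 1 := by linarith
    _ = Real.exp (L * (c * B)) + ((w:ℝ) + 1) := by rw [hrpow]; ring
    _ ≤ Real.exp (L * (c * B)) + Real.exp (L * (c * B)) * (c * L / (2 * Real.sqrt (w:ℝ))) := by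
        linarith
    _ = Real.exp (L * (c * B)) * (1 + c * L / (2 * Real.sqrt (w:ℝ))) := by ring
    _ ≤ Real.exp (L * (c * C)) := hstep
    _ = (2:ℝ) ^ (c * C) := (hrpow _).symm
end
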